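/- arXiv:1501.02138 — 13 statements merged into one kernel-verified Lean document; each statement's English description precedes it below -/
import Mathlib

section
/- Let d ≥ 6 be an integer. For every integer k with 1 ≤ k ≤ ⌊(d+1)/2⌋ − 1, one has C^d_{3,k} = (−1)^{d−k−1} · k! · (d−k−1)! · ( Σ_{{i,j} ⊆ I_k, i < j} 1/(i·j) − Σ_{i=1}^{k} 1/i² ), where the first sum runs over all two-element subsets {i,j} of I_k. -/
/-- `coefC d r i` is the coefficient of `z^r` in the degree-`d` polynomial
`c_i(z) = (z+i)(z+i-1)⋯(z+i-(d-1))`. -/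
noncomputable def coefC (d r : ℕ) (i : ℤ) : ℤ :=
  (∏ j ∈ Finset.range d, (Polynomial.X + Polynomial.C (i - (j : ℤ)))).coeff r

/-- Stirling numbers of the first kind: `stirl n k` is the coefficient of `z^k` in
`∏_{j=0}^{n-1} (z - j)`. -/
noncomputable def stirl (n k : ℕ) : ℤ :=
  (∏ j ∈ Finset.range n, (Polynomial.X - Polynomial.C (j : ℤ))).coeff k

/-- `Mrd d r = min { C^d_{r,i} : 1 ≤ i ≤ d-2 }`. -/
noncomputable def Mrd (d r : ℕ) : ℤ :=
  sInf {x : ℤ | ∃ i : ℕ, 1 ≤ i ∧ i ≤ d - 2 ∧ x = coefC d r (i : ℤ)}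

/-- `Nrd d r = min { C^d_{r,i} : ⌈(d-1)/2⌉ ≤ i ≤ d-2 }`; note `⌈(d-1)/2⌉ = (d-1+1)/2`
in natural-number arithmetic. -/
noncomputable def Nrd (d r : ℕ) : ℤ :=
  sInf {x : ℤ | ∃ i : ℕ, (d - 1 + 1) / 2 ≤ i ∧ i ≤ d - 2 ∧ x = coefC d r (i : ℤ)}

section Helpers
open Polynomial Finset

noncomputable def Pq (k : ℕ) : ℚ[X] := ∏ m ∈ Icc 1 k, (X + C (m:ℚ))
noncomputable def Qq (n : ℕ) : ℚ[X] := ∏ m ∈ Icc 1 n, (X - C (m:ℚ))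
noncomputable def Hh (k : ℕ) : ℚ := ∑ i ∈ Icc 1 k, 1/(i:ℚ)
noncomputable def Ee (k : ℕ) : ℚ := ∑ i ∈ Icc 1 k, ∑ j ∈ Icc 1 k, if i < j then 1/((i:ℚ)*(j:ℚ)) else 0

lemma Pq_succ (k : ℕ) : Pq (k+1) = Pq k * (X + C ((k:ℚ)+1)) := by
  unfold Pq
  rw [Finset.prod_Icc_succ_top (by omega)]
  push_cast
  ring

lemma Qq_succ (n : ℕ) : Qq (n+1) = Qq n * (X - C ((n:ℚ)+1)) := by
  unfold Qq
  rw [Finset.prod_Icc_succ_top (by omega)]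
  push_cast
  ring

lemma Hh_succ (k : ℕ) : Hh (k+1) = Hh k + 1/((k:ℚ)+1) := by
  unfold Hh
  rw [Finset.sum_Icc_succ_top (by omega)]
  push_cast
  ring

lemma coeff_mulXaddC (p : ℚ[X]) (a : ℚ) (r : ℕ) :
    (p * (X + C a)).coeff (r+1) = p.coeff r + a * p.coeff (r+1) := by
  rw [mul_add, coeff_add, coeff_mul_X, coeff_mul_C]
  ring

lemma coeff_mulXaddC_zero (p : ℚ[X]) (a : ℚ) :
    (p * (X + C a)).coeff 0 = a * p.coeff 0 := by
  rw [Polynomial.mul_coeff_zero]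
  simp [mul_comm]

lemma coeff_mulXsubC (p : ℚ[X]) (a : ℚ) (r : ℕ) :
    (p * (X - C a)).coeff (r+1) = p.coeff r - a * p.coeff (r+1) := by
  rw [mul_sub, coeff_sub, coeff_mul_X, coeff_mul_C]
  ring

lemma coeff_mulXsubC_zero (p : ℚ[X]) (a : ℚ) :
    (p * (X - C a)).coeff 0 = -a * p.coeff 0 := by
  rw [Polynomial.mul_coeff_zero]
  simp [mul_comm]

lemma Ee_succ (k : ℕ) : Ee (k+1) = Ee k + Hh k * (1/((k:ℚ)+1)) := by
  unfold Ee Hh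
  rw [Finset.sum_Icc_succ_top (by omega : 1 ≤ k+1)]
  have h1 : ∀ i ∈ Icc 1 k, (∑ j ∈ Icc 1 (k+1), if i < j then 1/((i:ℚ)*(j:ℚ)) else 0)
      = (∑ j ∈ Icc 1 k, if i < j then 1/((i:ℚ)*(j:ℚ)) else 0) + 1/((i:ℚ)*((k:ℚ)+1)) := by
    intro i hi
    rw [Finset.sum_Icc_succ_top (by omega : 1 ≤ k+1)]
    rw [if_pos (by simp at hi; omega)]
    push_cast
    ring
  rw [Finset.sum_congr rfl h1, Finset.sum_add_distrib]
  have h2 : (∑ j ∈ Icc 1 (k+1), if k+1 < j then 1/(((k:ℚ)+1)*(j:ℚ)) else 0) = 0 := by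
    apply Finset.sum_eq_zero
    intro j hj
    rw [if_neg (by simp at hj; omega)]
  have h3 : (∑ i ∈ Icc 1 k, 1/((i:ℚ)*((k:ℚ)+1))) = (∑ i ∈ Icc 1 k, 1/(i:ℚ)) * (1/((k:ℚ)+1)) := by
    rw [Finset.sum_mul]
    apply Finset.sum_congr rfl
    intro i _
    rw [one_div_mul_one_div]
  have h4 : ∀ j ∈ Icc 1 (k+1), (if (k+1:ℕ) < j then 1/(((k:ℚ)+1)*(j:ℚ)) else 0)
      = (if (k+1:ℕ) < j then 1/((((k+1:ℕ)):ℚ)*(j:ℚ)) else 0) := by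
    intro j _; push_cast; ring_nf
  rw [h3]
  push_cast
  rw [show (∑ j ∈ Icc 1 (k+1), if k+1 < j then 1/(((k:ℚ)+1)*(j:ℚ)) else 0) = 0 from h2]
  ring

-- coefficient values
lemma Pq_c0 (k : ℕ) : (Pq k).coeff 0 = (Nat.factorial k : ℚ) := by
  induction k with
  | zero => simp [Pq, Nat.factorial]
  | succ k ih =>
    rw [Pq_succ, coeff_mulXaddC_zero, ih, Nat.factorial_succ]
    push_cast; ring

lemma Pq_c1 (k : ℕ) : (Pq k).coeff 1 = (Nat.factorial k : ℚ) * Hh k := by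
  induction k with
  | zero => simp [Pq, Hh, Polynomial.coeff_one]
  | succ k ih =>
    rw [Pq_succ, show (1:ℕ) = 0 + 1 from rfl, coeff_mulXaddC, Pq_c0, ih, Hh_succ,
      Nat.factorial_succ]
    push_cast
    field_simp
    ring

lemma Pq_c2 (k : ℕ) : (Pq k).coeff 2 = (Nat.factorial k : ℚ) * Ee k := by
  induction k with
  | zero => simp [Pq, Ee, Polynomial.coeff_one]
  | succ k ih =>
    rw [Pq_succ, show (2:ℕ) = 1 + 1 from rfl, coeff_mulXaddC, Pq_c1, ih, Ee_succ,
      Nat.factorial_succ]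
    push_cast
    field_simp
    ring

lemma Qq_c0 (n : ℕ) : (Qq n).coeff 0 = (-1)^n * (Nat.factorial n : ℚ) := by
  induction n with
  | zero => simp [Qq, Nat.factorial]
  | succ n ih =>
    rw [Qq_succ, coeff_mulXsubC_zero, ih, Nat.factorial_succ]
    push_cast; ring

lemma Qq_c1 (n : ℕ) : (Qq n).coeff 1 = (-1)^(n+1) * (Nat.factorial n : ℚ) * Hh n := by
  induction n with
  | zero => simp [Qq, Hh, Polynomial.coeff_one]
  | succ n ih =>
    rw [Qq_succ, show (1:ℕ) = 0 + 1 from rfl, coeff_mulXsubC, Qq_c0, ih, Hh_succ,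
      Nat.factorial_succ]
    push_cast
    field_simp
    ring

lemma Qq_c2 (n : ℕ) : (Qq n).coeff 2 = (-1)^n * (Nat.factorial n : ℚ) * Ee n := by
  induction n with
  | zero => simp [Qq, Ee, Polynomial.coeff_one]
  | succ n ih =>
    rw [Qq_succ, show (2:ℕ) = 1 + 1 from rfl, coeff_mulXsubC, Qq_c1, ih, Ee_succ,
      Nat.factorial_succ]
    push_cast
    field_simp
    ring

-- product structure
lemma prod_base (k : ℕ) : (∏ j ∈ range (k+1), (X + C ((k:ℚ) - (j:ℕ)))) = Pq k * X := by
  induction k with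
  | zero => simp [Pq]
  | succ k ih =>
    rw [Finset.prod_range_succ']
    have h1 : ∀ j ∈ range (k+1), (X + C (((k+1:ℕ):ℚ) - ((j+1:ℕ):ℕ))) = X + C ((k:ℚ) - (j:ℕ)) := by
      intro j _
      push_cast
      ring_nf
    rw [Finset.prod_congr rfl h1, ih, Pq_succ]
    push_cast
    ring

lemma prod_split (k n : ℕ) :
    (∏ j ∈ range (k+1+n), (X + C ((k:ℚ) - (j:ℕ)))) = Pq k * X * Qq n := by
  induction n with
  | zero => rw [show k+1+0 = k+1 from rfl, prod_base]; simp [Qq]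
  | succ n ih =>
    rw [show k+1+(n+1) = (k+1+n)+1 from rfl, Finset.prod_range_succ, ih, Qq_succ]
    have : (X + C ((k:ℚ) - ((k+1+n:ℕ):ℕ))) = X - C ((n:ℚ)+1) := by
      rw [show ((k:ℚ) - ((k+1+n:ℕ):ℕ)) = -((n:ℚ)+1) by push_cast; ring, map_neg]
      ring
    rw [this]
    ring

lemma icc_eq_ioc (m : ℕ) : (Icc 1 m : Finset ℕ) = Ioc 0 m := by
  ext x; simp [Nat.lt_iff_add_one_le]

lemma hsplit {k n : ℕ} (hkn : k ≤ n) :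
    Hh n = Hh k + ∑ j ∈ Ioc k n, 1/(j:ℚ) := by
  unfold Hh
  rw [icc_eq_ioc, icc_eq_ioc,
    ← Finset.sum_Ioc_consecutive _ (Nat.zero_le k) hkn]

lemma esplit {k n : ℕ} (hkn : k ≤ n) :
    Ee n = Ee k + Hh k * (∑ j ∈ Ioc k n, 1/(j:ℚ))
      + ∑ i ∈ Ioc k n, ∑ j ∈ Ioc k n, (if i < j then 1/((i:ℚ)*(j:ℚ)) else 0) := by
  unfold Ee Hh
  rw [icc_eq_ioc, icc_eq_ioc]
  have h1 : ∀ i ∈ Ioc 0 n, (∑ j ∈ Ioc 0 n, if i < j then 1/((i:ℚ)*(j:ℚ)) else 0)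
      = (∑ j ∈ Ioc 0 k, if i < j then 1/((i:ℚ)*(j:ℚ)) else 0)
        + (∑ j ∈ Ioc k n, if i < j then 1/((i:ℚ)*(j:ℚ)) else 0) := by
    intro i _
    rw [← Finset.sum_Ioc_consecutive _ (Nat.zero_le k) hkn]
  rw [Finset.sum_congr rfl h1, Finset.sum_add_distrib,
    ← Finset.sum_Ioc_consecutive _ (Nat.zero_le k) hkn,
    ← Finset.sum_Ioc_consecutive
      (fun i => ∑ j ∈ Ioc k n, if i < j then 1/((i:ℚ)*(j:ℚ)) else 0) (Nat.zero_le k) hkn]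
  have h2 : (∑ i ∈ Ioc k n, ∑ j ∈ Ioc 0 k, if i < j then 1/((i:ℚ)*(j:ℚ)) else 0) = 0 := by
    apply Finset.sum_eq_zero; intro i hi
    apply Finset.sum_eq_zero; intro j hj
    simp only [Finset.mem_Ioc] at hi hj
    rw [if_neg (by omega)]
  have h3 : (∑ i ∈ Ioc 0 k, ∑ j ∈ Ioc k n, if i < j then 1/((i:ℚ)*(j:ℚ)) else 0)
      = (∑ i ∈ Ioc 0 k, 1/(i:ℚ)) * (∑ j ∈ Ioc k n, 1/(j:ℚ)) := by
    rw [Finset.sum_mul_sum]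
    apply Finset.sum_congr rfl; intro i hi
    apply Finset.sum_congr rfl; intro j hj
    simp only [Finset.mem_Ioc] at hi hj
    rw [if_pos (by omega), one_div_mul_one_div]
  rw [h2, h3]
  ring

lemma hsq (k : ℕ) : Hh k * Hh k = 2 * Ee k + ∑ i ∈ Icc 1 k, 1/((i:ℚ)^2) := by
  unfold Hh Ee
  rw [Finset.sum_mul_sum]
  have key : ∀ i ∈ Icc 1 k, ∀ j ∈ Icc 1 k, (1/(i:ℚ)) * (1/(j:ℚ))
      = (if i < j then 1/((i:ℚ)*(j:ℚ)) else 0)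
        + (if j < i then 1/((i:ℚ)*(j:ℚ)) else 0)
        + (if i = j then 1/((i:ℚ)^2) else 0) := by
    intro i _ j _
    rcases lt_trichotomy i j with h | h | h
    · rw [if_pos h, if_neg (by omega), if_neg (by omega), one_div_mul_one_div]; ring
    · subst h
      rw [if_neg (by omega), if_pos rfl, one_div_mul_one_div, sq]; ring
    · rw [if_neg (by omega), if_pos h, if_neg (by omega), one_div_mul_one_div]; ring
  calc (∑ i ∈ Icc 1 k, ∑ j ∈ Icc 1 k, (1/(i:ℚ)) * (1/(j:ℚ)))
      = ∑ i ∈ Icc 1 k, ∑ j ∈ Icc 1 k,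
          ((if i < j then 1/((i:ℚ)*(j:ℚ)) else 0)
            + (if j < i then 1/((i:ℚ)*(j:ℚ)) else 0)
            + (if i = j then 1/((i:ℚ)^2) else 0)) := by
        apply Finset.sum_congr rfl; intro i hi
        apply Finset.sum_congr rfl; intro j hj
        exact key i hi j hj
    _ = (∑ i ∈ Icc 1 k, ∑ j ∈ Icc 1 k, if i < j then 1/((i:ℚ)*(j:ℚ)) else 0)
        + (∑ i ∈ Icc 1 k, ∑ j ∈ Icc 1 k, if j < i then 1/((i:ℚ)*(j:ℚ)) else 0)
        + (∑ i ∈ Icc 1 k, ∑ j ∈ Icc 1 k, if i = j then 1/((i:ℚ)^2) else 0) := by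
        simp [Finset.sum_add_distrib]
    _ = 2 * (∑ i ∈ Icc 1 k, ∑ j ∈ Icc 1 k, if i < j then 1/((i:ℚ)*(j:ℚ)) else 0)
        + ∑ i ∈ Icc 1 k, 1/((i:ℚ)^2) := by
        have hswap : (∑ i ∈ Icc 1 k, ∑ j ∈ Icc 1 k, if j < i then 1/((i:ℚ)*(j:ℚ)) else 0)
            = (∑ i ∈ Icc 1 k, ∑ j ∈ Icc 1 k, if i < j then 1/((i:ℚ)*(j:ℚ)) else 0) := by
          rw [Finset.sum_comm]
          apply Finset.sum_congr rfl; intro i _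
          apply Finset.sum_congr rfl; intro j _
          rw [mul_comm (j:ℚ)]
        have hdiag : (∑ i ∈ Icc 1 k, ∑ j ∈ Icc 1 k, if i = j then 1/((i:ℚ)^2) else 0)
            = ∑ i ∈ Icc 1 k, 1/((i:ℚ)^2) := by
          apply Finset.sum_congr rfl; intro i hi
          rw [Finset.sum_ite_eq (Icc 1 k) i (fun _ => 1/((i:ℚ)^2)), if_pos hi]
        rw [hswap, hdiag]; ring


end Helpers

open Polynomial Finset in
theorem stmt_2 (d : ℕ) (hd : 6 ≤ d) (k : ℕ) (hk1 : 1 ≤ k) (hk2 : k ≤ (d + 1) / 2 - 1) :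
    (coefC d 3 (k : ℤ) : ℚ) =
      (-1) ^ (d - k - 1) * (Nat.factorial k : ℚ) * (Nat.factorial (d - k - 1) : ℚ) *
        ((∑ i ∈ Finset.Icc (k + 1) (d - k - 1), ∑ j ∈ Finset.Icc (k + 1) (d - k - 1),
            if i < j then 1 / ((i : ℚ) * (j : ℚ)) else 0) -
          ∑ i ∈ Finset.Icc 1 k, 1 / ((i : ℚ) ^ 2)) := by
  set n := d - k - 1 with hn
  have hdn : d = k + 1 + n := by omega
  have hkn : k ≤ n := by omega
  -- cast the integer coefficient to a rational coefficient
  have hcast : ((coefC d 3 (k : ℤ) : ℤ) : ℚ)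
      = (∏ j ∈ range d, (X + C ((k:ℚ) - (j:ℕ)))).coeff 3 := by
    unfold coefC
    have hmap : (∏ j ∈ range d, (X + C ((k:ℤ) - (j:ℕ)))).map (Int.castRingHom ℚ)
        = ∏ j ∈ range d, (X + C ((k:ℚ) - (j:ℕ))) := by
      rw [Polynomial.map_prod]
      apply Finset.prod_congr rfl
      intro j _
      rw [Polynomial.map_add, Polynomial.map_X, Polynomial.map_C]
      congr 1
      simp only [eq_intCast]
      push_cast
      ring
    rw [← hmap, Polynomial.coeff_map]
    simp
  rw [hcast, hdn, prod_split,
    show Pq k * X * Qq n = X * (Pq k * Qq n) by ring, Polynomial.coeff_X_mul,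
    Polynomial.coeff_mul, Finset.Nat.sum_antidiagonal_eq_sum_range_succ_mk,
    Finset.sum_range_succ, Finset.sum_range_succ, Finset.sum_range_succ,
    Finset.sum_range_zero]
  simp only [Nat.sub_zero, Nat.sub_self]
  rw [Pq_c0, Pq_c1, Pq_c2, Qq_c0, Qq_c1, Qq_c2]
  have key : Ee n + Ee k - Hh k * Hh n
      = (∑ i ∈ Ioc k n, ∑ j ∈ Ioc k n, if i < j then 1/((i:ℚ)*(j:ℚ)) else 0)
        - ∑ i ∈ Icc 1 k, 1/((i:ℚ)^2) := by
    linear_combination esplit hkn - Hh k * hsplit hkn - hsq k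
  rw [show (Icc (k+1) n : Finset ℕ) = Ioc k n from Finset.Icc_add_one_left_eq_Ioc k n]
  linear_combination ((-1:ℚ)^n * (Nat.factorial k : ℚ) * (Nat.factorial n : ℚ)) * key
end

section
/- Let d ≥ 19 be an integer. Then for every integer k with 2 ≤ k ≤ ⌊(d+1)/2⌋ − 1, one has |C^d_{3,1}| > |C^d_{3,k}|. -/
/-!
Write `q = d - 1 - i`. Then `c_i(z) = z · ∏_{m=1}^{i} (z + m) · ∏_{m=1}^{q} (z - m)`, and the
`z³`-coefficient comes from the three lowest coefficients of the two products, which are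
expressed through `H_n = ∑ 1/m` and `H⁽²⁾_n = ∑ 1/m²`:
`2 C^d_{3,i} = (-1)^q i! q! ((H_i - H_q)² - H⁽²⁾_i - H⁽²⁾_q)`.
Since `H⁽²⁾ ≤ 2`, the bracket for `i = 1` is at least `(H_{d-2} - 1)² - 3`, while for
`2 ≤ k ≤ q` it is at most `(H_{d-2} - 1)² + 4` in absolute value and `k! q! ≤ 2 (d-3)!`.
As `H_{17} ≥ 3`, the extra factor `d - 2 ≥ 17` of `(d-2)! = (d-2)(d-3)!` wins.
-/

open Polynomial Finset Nat

def sumInvSq (n : ℕ) : ℚ := ∑ i ∈ range n, ((i + 1 : ℚ) ^ 2)⁻¹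

-- Doubling the `z²`-coefficient keeps the identity valid in characteristic `2`.
theorem coeff_zero_one_two_prod_X_add_C {ι K : Type*} [Field K] (s : Finset ι) (a : ι → K)
    (ha : ∀ i ∈ s, a i ≠ 0) :
    (∏ i ∈ s, (X + C (a i))).coeff 0 = ∏ i ∈ s, a i ∧
    (∏ i ∈ s, (X + C (a i))).coeff 1 = (∏ i ∈ s, a i) * ∑ i ∈ s, (a i)⁻¹ ∧
    2 * (∏ i ∈ s, (X + C (a i))).coeff 2 =
      (∏ i ∈ s, a i) * ((∑ i ∈ s, (a i)⁻¹) ^ 2 - ∑ i ∈ s, (a i)⁻¹ ^ 2) := by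
  classical
  induction s using Finset.induction_on with
  | empty => simp [coeff_one]
  | insert j s hj ih =>
    obtain ⟨h0, h1, h2⟩ := ih fun i hi => ha i (mem_insert_of_mem hi)
    have hja : a j ≠ 0 := ha j (mem_insert_self j s)
    simp only [prod_insert hj, sum_insert hj, add_mul, coeff_add, coeff_X_mul, coeff_X_mul_zero,
      coeff_C_mul, zero_add]
    refine ⟨by rw [h0], by rw [h0, h1]; field_simp, ?_⟩
    rw [mul_add, mul_left_comm, h2, h1]
    field_simp
    ring

theorem coeff_prod_X_add_succ (n : ℕ) :
    (∏ m ∈ range n, (X + C ((m : ℚ) + 1))).coeff 0 = (n ! : ℚ) ∧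
    (∏ m ∈ range n, (X + C ((m : ℚ) + 1))).coeff 1 = n ! * harmonic n ∧
    2 * (∏ m ∈ range n, (X + C ((m : ℚ) + 1))).coeff 2 = n ! * (harmonic n ^ 2 - sumInvSq n) := by
  have hfact : ∏ m ∈ range n, ((m : ℚ) + 1) = n ! := by
    rw [← prod_range_add_one_eq_factorial]; push_cast; rfl
  have hH : ∑ m ∈ range n, ((m : ℚ) + 1)⁻¹ = harmonic n := by simp [harmonic]
  simpa [hfact, hH, sumInvSq] using
    coeff_zero_one_two_prod_X_add_C (range n) (fun m => (m : ℚ) + 1) fun m _ => by positivity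

theorem coeff_prod_X_sub_succ (n : ℕ) :
    (∏ m ∈ range n, (X - C ((m : ℚ) + 1))).coeff 0 = (-1) ^ n * (n ! : ℚ) ∧
    (∏ m ∈ range n, (X - C ((m : ℚ) + 1))).coeff 1 = -((-1) ^ n * n ! * harmonic n) ∧
    2 * (∏ m ∈ range n, (X - C ((m : ℚ) + 1))).coeff 2 =
      (-1) ^ n * n ! * (harmonic n ^ 2 - sumInvSq n) := by
  have hfact : ∏ m ∈ range n, -((m : ℚ) + 1) = (-1) ^ n * n ! := by
    rw [prod_neg, card_range, ← prod_range_add_one_eq_factorial]; push_cast; rfl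
  have hH : ∑ m ∈ range n, -((m : ℚ) + 1)⁻¹ = -harmonic n := by
    simp only [sum_neg_distrib, harmonic]; push_cast; rfl
  have hS : ∑ m ∈ range n, ((m : ℚ) + 1)⁻¹ ^ 2 = sumInvSq n := by simp only [sumInvSq, inv_pow]
  obtain ⟨h0, h1, h2⟩ := coeff_zero_one_two_prod_X_add_C (range n) (fun m => -((m : ℚ) + 1))
    fun m _ => neg_ne_zero.mpr (by positivity)
  simp only [C_neg, ← sub_eq_add_neg, hfact, inv_neg, hH, neg_sq, hS] at h0 h1 h2
  exact ⟨h0, by rw [h1]; ring, h2⟩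

theorem coefC_cast (d r : ℕ) (i : ℤ) :
    (coefC d r i : ℚ) = (∏ j ∈ range d, (X + C ((i : ℚ) - j))).coeff r := by
  rw [coefC, ← eq_intCast (Int.castRingHom ℚ), ← coeff_map, Polynomial.map_prod]
  simp

theorem prod_range_X_add_C_sub_eq_mul (i q : ℕ) :
    ∏ j ∈ range (i + 1 + q), (X + C ((i : ℚ) - j)) =
      (∏ m ∈ range i, (X + C ((m : ℚ) + 1))) * (∏ m ∈ range q, (X - C ((m : ℚ) + 1))) * X := by
  rw [prod_range_add, prod_range_succ, ← prod_range_reflect _ i, sub_self, C_0, add_zero,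
    mul_right_comm]
  congr 2 <;> refine prod_congr rfl fun m hm => ?_
  · rw [Nat.cast_sub (by simp at hm; omega), Nat.cast_sub (by simp at hm; omega)]
    ring_nf
  · rw [sub_eq_add_neg X, ← C_neg]
    push_cast
    ring_nf

theorem coeff_two_mul {R : Type*} [CommSemiring R] (p q : R[X]) :
    (p * q).coeff 2 = p.coeff 0 * q.coeff 2 + p.coeff 1 * q.coeff 1 + p.coeff 2 * q.coeff 0 := by
  rw [coeff_mul, Finset.Nat.sum_antidiagonal_eq_sum_range_succ (fun i j => p.coeff i * q.coeff j)]
  simp only [sum_range_succ, sum_range_zero, zero_add]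

theorem two_mul_coefC_three {i q d : ℕ} (hd : i + 1 + q = d) :
    2 * (coefC d 3 i : ℚ) =
      (-1) ^ q * i ! * q ! * ((harmonic i - harmonic q) ^ 2 - (sumInvSq i + sumInvSq q)) := by
  obtain ⟨a0, a1, a2⟩ := coeff_prod_X_add_succ i
  obtain ⟨b0, b1, b2⟩ := coeff_prod_X_sub_succ q
  rw [coefC_cast, ← hd, Int.cast_natCast, prod_range_X_add_C_sub_eq_mul, coeff_mul_X,
    coeff_two_mul, a0, a1, b0, b1]
  linear_combination (i ! : ℚ) * b2 + (-1) ^ q * q ! * a2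

theorem harmonic_mono : Monotone harmonic :=
  monotone_nat_of_le_succ fun n => by
    rw [harmonic_succ]; exact le_add_of_nonneg_right (by positivity)

theorem one_le_harmonic {n : ℕ} (hn : 1 ≤ n) : 1 ≤ harmonic n := by
  simpa [harmonic] using harmonic_mono hn

theorem three_le_harmonic {n : ℕ} (hn : 17 ≤ n) : 3 ≤ harmonic n :=
  le_trans (by norm_num [harmonic, sum_range_succ]) (harmonic_mono hn)

theorem sumInvSq_nonneg (n : ℕ) : 0 ≤ sumInvSq n := sum_nonneg fun _ _ => by positivity

theorem sumInvSq_le_two (n : ℕ) : sumInvSq n ≤ 2 := by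
  have h := sum_Ioo_inv_sq_le (α := ℚ) 0 (n + 1)
  rw [← Finset.Ico_add_one_left_eq_Ioo, ← sum_Ico_add', ← range_eq_Ico] at h
  simpa [sumInvSq] using h

theorem factorial_mul_factorial_le {k q : ℕ} (hk : 2 ≤ k) (hkq : k ≤ q) :
    k ! * q ! ≤ 2 * (k + q - 2)! := by
  induction k, hk using Nat.le_induction with
  | base => simp [Nat.factorial]
  | succ k hk ih =>
    rw [show k + 1 + q - 2 = k + q - 2 + 1 by omega, factorial_succ, factorial_succ]
    calc (k + 1) * k ! * q ! = (k + 1) * (k ! * q !) := by ring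
      _ ≤ (k + q - 2 + 1) * (2 * (k + q - 2)!) := Nat.mul_le_mul (by omega) (ih (by omega))
      _ = 2 * ((k + q - 2 + 1) * (k + q - 2)!) := by ring

theorem two_mul_abs_coefC_three {i q d : ℕ} (hd : i + 1 + q = d) :
    2 * |(coefC d 3 i : ℚ)| =
      i ! * q ! * |(harmonic i - harmonic q) ^ 2 - (sumInvSq i + sumInvSq q)| := by
  rw [← abs_two, ← abs_mul, two_mul_coefC_three hd]
  simp [abs_mul]

theorem two_mul_abs_coefC_three_le {k q d : ℕ} (hk : 1 ≤ k) (hkq : k ≤ q) (hd : k + 1 + q = d) :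
    2 * |(coefC d 3 k : ℚ)| ≤ k ! * q ! * ((harmonic (d - 2) - 1) ^ 2 + 4) := by
  rw [two_mul_abs_coefC_three hd]
  gcongr
  have h1k : 1 ≤ harmonic k := one_le_harmonic hk
  have hkq : harmonic k ≤ harmonic q := harmonic_mono hkq
  have hqd : harmonic q ≤ harmonic (d - 2) := harmonic_mono (by omega)
  rw [abs_le]
  constructor <;> nlinarith [sumInvSq_nonneg k, sumInvSq_nonneg q, sumInvSq_le_two k,
    sumInvSq_le_two q]

theorem le_two_mul_abs_coefC_three_one {n d : ℕ} (hd : 1 + 1 + n = d) :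
    n ! * ((harmonic n - 1) ^ 2 - 3) ≤ 2 * |(coefC d 3 (1 : ℕ) : ℚ)| := by
  rw [two_mul_abs_coefC_three hd, factorial_one, Nat.cast_one, one_mul]
  have hS : sumInvSq 1 = 1 := by simp [sumInvSq]
  have hH : harmonic 1 = 1 := by simp [harmonic]
  gcongr
  refine le_trans ?_ (le_abs_self _)
  rw [hS, hH, sub_sq_comm]
  linarith [sumInvSq_le_two n]

theorem stmt_3 (d : ℕ) (hd : 19 ≤ d) (k : ℕ) (hk1 : 2 ≤ k) (hk2 : k ≤ (d + 1) / 2 - 1) :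
    |coefC d 3 ((1 : ℕ) : ℤ)| > |coefC d 3 (k : ℤ)| := by
  set T := (harmonic (d - 2) - 1) ^ 2
  have hT : 4 ≤ T := by nlinarith [three_le_harmonic (show 17 ≤ d - 2 by omega)]
  have hfact : (k ! * (d - 1 - k)! : ℚ) ≤ 2 * (d - 3)! := by
    have := factorial_mul_factorial_le hk1 (show k ≤ d - 1 - k by omega)
    rw [show k + (d - 1 - k) - 2 = d - 3 by omega] at this
    exact_mod_cast this
  have hsucc : ((d - 2)! : ℚ) = ((d - 3 : ℕ) + 1 : ℚ) * (d - 3)! := by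
    rw [show d - 2 = d - 3 + 1 by omega, factorial_succ]; push_cast; ring
  have hd3 : (16 : ℚ) ≤ (d - 3 : ℕ) := by exact_mod_cast (show 16 ≤ d - 3 by omega)
  have hpos : (0 : ℚ) < (d - 3)! := by positivity
  have key : 2 * (T + 4) < ((d - 3 : ℕ) + 1 : ℚ) * (T - 3) := by nlinarith
  suffices 2 * |(coefC d 3 k : ℚ)| < 2 * |(coefC d 3 (1 : ℕ) : ℚ)| by
    exact_mod_cast lt_of_mul_lt_mul_left this zero_le_two
  calc 2 * |(coefC d 3 k : ℚ)| ≤ k ! * (d - 1 - k)! * (T + 4) :=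
        two_mul_abs_coefC_three_le (by omega) (by omega) (by omega)
    _ ≤ 2 * (d - 3)! * (T + 4) := by gcongr
    _ < (d - 2)! * (T - 3) := by rw [hsucc]; linarith [mul_lt_mul_of_pos_left key hpos]
    _ ≤ 2 * |(coefC d 3 (1 : ℕ) : ℚ)| := le_two_mul_abs_coefC_three_one (by omega)
end

section
/- Let d ≥ 6 be an integer. Then M_{3,d} = C^d_{3,d−3} if 6 ≤ d ≤ 9, and M_{3,d} = C^d_{3,d−2} if d ≥ 10. -/
open Polynomial Finset

theorem coeff_ascPochhammer {S : Type*} [Semiring S] (n k : ℕ) :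
    (ascPochhammer S n).coeff k = Nat.stirlingFirst n k := by
  induction n generalizing k with
  | zero => rcases k with _ | k <;> simp [coeff_one]
  | succ n ih =>
    rw [ascPochhammer_succ_right, mul_add, coeff_add, ← C_eq_natCast, coeff_mul_C]
    rcases k with _ | k
    · rcases n with _ | n <;> simp [ih]
    · rw [coeff_mul_X, ih, ih, Nat.stirlingFirst_succ_succ, Nat.cast_add, Nat.cast_mul,
        Nat.cast_comm, add_comm]

theorem coeff_descPochhammer {R : Type*} [Ring R] (n k : ℕ) :
    (descPochhammer R n).coeff k = (-1) ^ (n + k) * Nat.stirlingFirst n k := by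
  induction n generalizing k with
  | zero => rcases k with _ | k <;> simp [coeff_one]
  | succ n ih =>
    rw [descPochhammer_succ_right, mul_sub, coeff_sub, ← C_eq_natCast, coeff_mul_C]
    rcases k with _ | k
    · rcases n with _ | n <;> simp [ih]
    · rw [coeff_mul_X, ih, ih, Nat.stirlingFirst_succ_succ, Nat.cast_add, Nat.cast_mul,
        Nat.cast_comm]
      simp only [show n + 1 + (k + 1) = n + k + 2 by ring, pow_add, neg_one_sq]
      noncomm_ring

theorem prod_range_X_add_C_sub_eq_ascPochhammer {R : Type*} [CommRing R] (a : ℕ) :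
    ∏ j ∈ range (a + 1), (X + C ((a : R) - j)) = ascPochhammer R (a + 1) := by
  induction a with
  | zero => simp
  | succ a ih =>
    rw [prod_range_succ', ascPochhammer_succ_right, ← ih]
    push_cast
    simp only [add_sub_add_right_eq_sub, sub_zero, C_add, C_1, map_natCast]

theorem X_mul_prod_range_X_add_C_sub {R : Type*} [CommRing R] (a b : ℕ) :
    X * ∏ j ∈ range (a + b + 1), (X + C ((a : R) - j)) =
      ascPochhammer R (a + 1) * descPochhammer R (b + 1) := by
  induction b with
  | zero => rw [add_zero, prod_range_X_add_C_sub_eq_ascPochhammer, descPochhammer_one, mul_comm]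
  | succ b ih =>
    rw [← add_assoc, prod_range_succ, ← mul_assoc, ih, descPochhammer_succ_right R (b + 1),
      mul_assoc]
    congr 2
    push_cast
    rw [C_sub, C_add, C_add, map_natCast, map_natCast, C_1]
    ring

/- Up to the sign `(-1) ^ (M + 1)`, these are the coefficients of `X ^ 3` and `X ^ 4` in
`ascPochhammer ℤ N * descPochhammer ℤ M`. -/
def stirlingCross₂ (N M : ℕ) : ℤ :=
  N.stirlingFirst 2 * M.stirlingFirst 1 - N.stirlingFirst 1 * M.stirlingFirst 2

def stirlingCross₃ (N M : ℕ) : ℤ :=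
  N.stirlingFirst 1 * M.stirlingFirst 3 - N.stirlingFirst 2 * M.stirlingFirst 2 +
    N.stirlingFirst 3 * M.stirlingFirst 1

theorem coefC_add_add_one_three (a b : ℕ) :
    coefC (a + b + 1) 3 a = (-1) ^ b * stirlingCross₃ (a + 1) (b + 1) := by
  rw [coefC, ← coeff_X_mul, X_mul_prod_range_X_add_C_sub, coeff_mul]
  simp only [Nat.sum_antidiagonal_succ, Nat.antidiagonal_zero, sum_singleton, coeff_ascPochhammer,
    coeff_descPochhammer, Nat.stirlingFirst_succ_zero, stirlingCross₃]
  ring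

theorem stirlingCross₃_comm (N M : ℕ) : stirlingCross₃ N M = stirlingCross₃ M N := by
  rw [stirlingCross₃, stirlingCross₃]; ring

theorem stirlingCross₂_swap (N M : ℕ) : stirlingCross₂ M N = -stirlingCross₂ N M := by
  rw [stirlingCross₂, stirlingCross₂]; ring

theorem stirlingCross₃_succ_left {N : ℕ} (hN : N ≠ 0) (M : ℕ) :
    stirlingCross₃ (N + 1) M = N * stirlingCross₃ N M + stirlingCross₂ N M := by
  obtain ⟨n, rfl⟩ := Nat.exists_eq_succ_of_ne_zero hN
  simp only [stirlingCross₃, stirlingCross₂, Nat.stirlingFirst_succ_succ,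
    Nat.stirlingFirst_succ_zero]
  push_cast; ring

theorem stirlingCross₂_succ_left {N : ℕ} (hN : N ≠ 0) (M : ℕ) :
    stirlingCross₂ (N + 1) M =
      N * stirlingCross₂ N M + N.stirlingFirst 1 * M.stirlingFirst 1 := by
  obtain ⟨n, rfl⟩ := Nat.exists_eq_succ_of_ne_zero hN
  simp only [stirlingCross₂, Nat.stirlingFirst_succ_succ, Nat.stirlingFirst_succ_zero]
  push_cast; ring

theorem stirlingCross₂_succ_right (N : ℕ) {M : ℕ} (hM : M ≠ 0) :
    stirlingCross₂ N (M + 1) =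
      M * stirlingCross₂ N M - N.stirlingFirst 1 * M.stirlingFirst 1 := by
  rw [stirlingCross₂_swap, stirlingCross₂_succ_left hM, stirlingCross₂_swap M N]; ring

theorem stirlingCross₂_nonneg {N M : ℕ} (hM : M ≠ 0) (h : M ≤ N) : 0 ≤ stirlingCross₂ N M := by
  induction N, h using Nat.le_induction with
  | base => simp [stirlingCross₂, mul_comm]
  | succ N hMN ih =>
    rw [stirlingCross₂_succ_left (by omega)]
    positivity

theorem stirlingCross₂_succ_right_le_succ_left {N M : ℕ} (hM : M ≠ 0) (h : M ≤ N) :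
    stirlingCross₂ N (M + 1) ≤ stirlingCross₂ (N + 1) M := by
  rw [stirlingCross₂_succ_left (by omega), stirlingCross₂_succ_right N hM]
  have hU := stirlingCross₂_nonneg hM h
  have : (M : ℤ) ≤ N := by exact_mod_cast h
  nlinarith [mul_nonneg (Nat.cast_nonneg (α := ℤ) (N.stirlingFirst 1))
    (Nat.cast_nonneg (α := ℤ) (M.stirlingFirst 1))]

theorem stirlingCross₂_le_add {N k : ℕ} (h : k + 2 ≤ N) :
    stirlingCross₂ N (k + 2) ≤ stirlingCross₂ (N + k) 2 := by
  induction k generalizing N with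
  | zero => rfl
  | succ k ih =>
    calc stirlingCross₂ N (k + 2 + 1) ≤ stirlingCross₂ (N + 1) (k + 2) :=
          stirlingCross₂_succ_right_le_succ_left (by omega) (by omega)
      _ ≤ stirlingCross₂ (N + 1 + k) 2 := ih (by omega)
      _ = stirlingCross₂ (N + (k + 1)) 2 := by rw [add_right_comm, add_assoc]

theorem abs_stirlingCross₂_le {N M q : ℕ} (hN : 2 ≤ N) (hM : 2 ≤ M) (h : N + M = q + 2) :
    |stirlingCross₂ N M| ≤ stirlingCross₂ q 2 := by
  wlog hMN : M ≤ N generalizing N M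
  · rw [stirlingCross₂_swap M N, abs_neg]
    exact this hM hN (by omega) (by omega)
  rw [abs_of_nonneg (stirlingCross₂_nonneg (by omega) hMN)]
  obtain ⟨k, rfl⟩ : ∃ k, M = k + 2 := ⟨M - 2, by omega⟩
  obtain rfl : q = N + k := by omega
  exact stirlingCross₂_le_add hMN

theorem abs_stirlingCross₃_le {N M q : ℕ} (hN : 2 ≤ N) (hM : 2 ≤ M) (hq : 9 ≤ q)
    (h : N + M = q + 2) : |stirlingCross₃ N M| ≤ stirlingCross₃ q 2 := by
  induction q, hq using Nat.le_induction generalizing N M with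
  | base =>
    have hN9 : N ≤ 9 := by omega
    obtain rfl : M = 11 - N := by omega
    interval_cases N <;> decide
  | succ q hq ih =>
    wlog hN3 : 3 ≤ N generalizing N M
    · rw [stirlingCross₃_comm]
      exact this hM hN (by omega) (by omega)
    obtain ⟨n, rfl⟩ : ∃ n, N = n + 1 := ⟨N - 1, by omega⟩
    have hW := ih (N := n) (by omega) hM (by omega)
    have hU := abs_stirlingCross₂_le (N := n) (q := q) (by omega) hM (by omega)
    have hn : (n : ℤ) ≤ q := by exact_mod_cast (by omega : n ≤ q)
    rw [stirlingCross₃_succ_left (by omega), stirlingCross₃_succ_left (by omega)]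
    calc |n * stirlingCross₃ n M + stirlingCross₂ n M|
        ≤ n * |stirlingCross₃ n M| + |stirlingCross₂ n M| := by
          grw [abs_add_le, abs_mul, Nat.abs_cast]
      _ ≤ q * stirlingCross₃ q 2 + stirlingCross₂ q 2 :=
          add_le_add (mul_le_mul hn hW (abs_nonneg _) (by positivity)) hU

theorem coefC_three_of_lt {d i : ℕ} (h : i < d) :
    coefC d 3 i = (-1) ^ (d - 1 - i) * stirlingCross₃ (i + 1) (d - i) := by
  obtain ⟨b, rfl⟩ : ∃ b, d = i + b + 1 := ⟨d - 1 - i, by omega⟩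
  rw [coefC_add_add_one_three, show i + b + 1 - 1 - i = b by omega, show i + b + 1 - i = b + 1 by omega]

theorem coefC_three_sub_three_le {d i : ℕ} (hd₁ : 6 ≤ d) (hd₂ : d ≤ 9) (hi₁ : 1 ≤ i)
    (hi₂ : i ≤ d - 2) : coefC d 3 (d - 3 : ℕ) ≤ coefC d 3 i := by
  rw [coefC_three_of_lt (by omega), coefC_three_of_lt (by omega)]
  interval_cases d <;> interval_cases i <;> decide

theorem coefC_three_sub_two_le {d i : ℕ} (hd : 10 ≤ d) (hi₁ : 1 ≤ i) (hi₂ : i ≤ d - 2) :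
    coefC d 3 (d - 2 : ℕ) ≤ coefC d 3 i := by
  rw [coefC_three_of_lt (by omega), coefC_three_of_lt (by omega), show d - 1 - (d - 2) = 1 by omega,
    show d - 2 + 1 = d - 1 by omega, show d - (d - 2) = 2 by omega, pow_one, neg_one_mul]
  have hW := abs_stirlingCross₃_le (N := i + 1) (M := d - i) (q := d - 1)
    (by omega) (by omega) (by omega) (by omega)
  calc -stirlingCross₃ (d - 1) 2
      ≤ -|(-1) ^ (d - 1 - i) * stirlingCross₃ (i + 1) (d - i)| := by
        rw [abs_mul, abs_neg_one_pow, one_mul]; exact neg_le_neg hW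
    _ ≤ _ := neg_abs_le _

theorem Mrd_eq_of_forall_le {d r i₀ : ℕ} (h₁ : 1 ≤ i₀) (h₂ : i₀ ≤ d - 2)
    (hle : ∀ i, 1 ≤ i → i ≤ d - 2 → coefC d r i₀ ≤ coefC d r i) : Mrd d r = coefC d r i₀ :=
  IsLeast.csInf_eq ⟨⟨i₀, h₁, h₂, rfl⟩, by rintro _ ⟨i, hi₁, hi₂, rfl⟩; exact hle i hi₁ hi₂⟩

theorem stmt_4 (d : ℕ) (hd : 6 ≤ d) :
    Mrd d 3 = if d ≤ 9 then coefC d 3 ((d : ℤ) - 3) else coefC d 3 ((d : ℤ) - 2) := by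
  split_ifs with h9
  · rw [show (d : ℤ) - 3 = (d - 3 : ℕ) by omega]
    exact Mrd_eq_of_forall_le (by omega) (by omega)
      fun i hi₁ hi₂ => coefC_three_sub_three_le hd h9 hi₁ hi₂
  · rw [show (d : ℤ) - 2 = (d - 2 : ℕ) by omega]
    exact Mrd_eq_of_forall_le (by omega) le_rfl
      fun i hi₁ hi₂ => coefC_three_sub_two_le (by omega) hi₁ hi₂
end

section
/- Let x ∈ ℤ and y ∈ ℤ with y > 0. Then Σ_{−y ≤ a < b < c ≤ y} (x+a)(x+b)(x+c) = binom(2y+1, 3)·x³ − binom(2y+2, 4)·x, where the sum runs over all triples of integers a < b < c with −y ≤ a and c ≤ y. -/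
/- ### Auxiliary elementary symmetric sums -/

private def S1 (x : ℤ) (s : Finset ℤ) : ℤ := ∑ a ∈ s, (x + a)

private def S2 (x : ℤ) (s : Finset ℤ) : ℤ :=
  ∑ a ∈ s, ∑ b ∈ s, if a < b then (x + a) * (x + b) else 0

private def S3 (x : ℤ) (s : Finset ℤ) : ℤ :=
  ∑ a ∈ s, ∑ b ∈ s, ∑ c ∈ s, if a < b ∧ b < c then (x + a) * (x + b) * (x + c) else 0

private lemma S1_insert (x u : ℤ) (s : Finset ℤ) (hmem : u ∉ s) :
    S1 x (insert u s) = (x + u) + S1 x s := by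
  unfold S1
  exact Finset.sum_insert hmem

private lemma S2_insert_max (x u : ℤ) (s : Finset ℤ) (hu : ∀ t ∈ s, t < u) :
    S2 x (insert u s) = S2 x s + (x + u) * S1 x s := by
  have hmem : u ∉ s := fun h => lt_irrefl u (hu u h)
  unfold S2 S1
  rw [Finset.sum_insert hmem]
  have h1 : (∑ b ∈ insert u s, if u < b then (x+u)*(x+b) else 0) = 0 := by
    apply Finset.sum_eq_zero
    intro b hb
    rcases Finset.mem_insert.mp hb with h | h
    · simp [h]
    · rw [if_neg (not_lt.mpr (hu b h).le)]
  rw [h1, zero_add, Finset.mul_sum, ← Finset.sum_add_distrib]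
  apply Finset.sum_congr rfl
  intro a ha
  rw [Finset.sum_insert hmem, if_pos (hu a ha)]
  ring

private lemma S2_insert_min (x u : ℤ) (s : Finset ℤ) (hu : ∀ t ∈ s, u < t) :
    S2 x (insert u s) = S2 x s + (x + u) * S1 x s := by
  have hmem : u ∉ s := fun h => lt_irrefl u (hu u h)
  unfold S2 S1
  rw [Finset.sum_insert hmem]
  have h1 : (∑ b ∈ insert u s, if u < b then (x+u)*(x+b) else 0)
      = (x + u) * ∑ a ∈ s, (x + a) := by
    rw [Finset.sum_insert hmem, if_neg (lt_irrefl u), zero_add, Finset.mul_sum]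
    exact Finset.sum_congr rfl fun b hb => by rw [if_pos (hu b hb)]
  rw [h1]
  have h2 : ∀ a ∈ s, (∑ b ∈ insert u s, if a < b then (x+a)*(x+b) else 0)
      = ∑ b ∈ s, if a < b then (x+a)*(x+b) else 0 := by
    intro a ha
    rw [Finset.sum_insert hmem, if_neg (not_lt.mpr (hu a ha).le), zero_add]
  rw [Finset.sum_congr rfl h2]
  ring

private lemma S3_insert_max (x u : ℤ) (s : Finset ℤ) (hu : ∀ t ∈ s, t < u) :
    S3 x (insert u s) = S3 x s + (x + u) * S2 x s := by
  have hmem : u ∉ s := fun h => lt_irrefl u (hu u h)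
  unfold S3 S2
  rw [Finset.sum_insert hmem]
  have h1 : (∑ b ∈ insert u s, ∑ c ∈ insert u s,
      if u < b ∧ b < c then (x+u)*(x+b)*(x+c) else 0) = 0 := by
    apply Finset.sum_eq_zero; intro b hb
    apply Finset.sum_eq_zero; intro c hc
    rcases Finset.mem_insert.mp hb with h | h
    · simp [h]
    · exact if_neg (fun hh => absurd hh.1 (not_lt.mpr (hu b h).le))
  rw [h1, zero_add, Finset.mul_sum, ← Finset.sum_add_distrib]
  apply Finset.sum_congr rfl
  intro a ha
  rw [Finset.sum_insert hmem]
  have h2 : (∑ c ∈ insert u s, if a < u ∧ u < c then (x+a)*(x+u)*(x+c) else 0) = 0 := by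
    apply Finset.sum_eq_zero; intro c hc
    rcases Finset.mem_insert.mp hc with h | h
    · simp [h]
    · exact if_neg (fun hh => absurd hh.2 (not_lt.mpr (hu c h).le))
  rw [h2, zero_add]
  have h3 : ∀ b ∈ s, (∑ c ∈ insert u s, if a < b ∧ b < c then (x+a)*(x+b)*(x+c) else 0)
      = (∑ c ∈ s, if a < b ∧ b < c then (x+a)*(x+b)*(x+c) else 0)
        + (if a < b then (x+a)*(x+b) else 0) * (x+u) := by
    intro b hb
    rw [Finset.sum_insert hmem]
    have heq : (if a < b ∧ b < u then (x+a)*(x+b)*(x+u) else 0)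
        = (if a < b then (x+a)*(x+b) else 0) * (x+u) := by
      have hb' : b < u := hu b hb
      by_cases hab : a < b
      · rw [if_pos ⟨hab, hb'⟩, if_pos hab]
      · rw [if_neg (fun hh => hab hh.1), if_neg hab, zero_mul]
    rw [heq]; ring
  rw [Finset.sum_congr rfl h3, Finset.sum_add_distrib, ← Finset.sum_mul]
  ring

private lemma S3_insert_min (x u : ℤ) (s : Finset ℤ) (hu : ∀ t ∈ s, u < t) :
    S3 x (insert u s) = S3 x s + (x + u) * S2 x s := by
  have hmem : u ∉ s := fun h => lt_irrefl u (hu u h)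
  unfold S3 S2
  rw [Finset.sum_insert hmem]
  have h1 : (∑ b ∈ insert u s, ∑ c ∈ insert u s,
      if u < b ∧ b < c then (x+u)*(x+b)*(x+c) else 0)
      = (x+u) * ∑ b ∈ s, ∑ c ∈ s, if b < c then (x+b)*(x+c) else 0 := by
    rw [Finset.sum_insert hmem]
    have hz : (∑ c ∈ insert u s, if u < u ∧ u < c then (x+u)*(x+u)*(x+c) else 0) = 0 :=
      Finset.sum_eq_zero fun c _ => if_neg (fun hh => lt_irrefl u hh.1)
    rw [hz, zero_add, Finset.mul_sum]
    apply Finset.sum_congr rfl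
    intro b hb
    rw [Finset.sum_insert hmem, if_neg (fun hh => absurd hh.2 (not_lt.mpr (hu b hb).le)),
        zero_add, Finset.mul_sum]
    apply Finset.sum_congr rfl
    intro c hc
    by_cases hbc : b < c
    · rw [if_pos ⟨hu b hb, hbc⟩, if_pos hbc]; ring
    · rw [if_neg (fun hh => hbc hh.2), if_neg hbc, mul_zero]
  rw [h1]
  have h2 : ∀ a ∈ s, (∑ b ∈ insert u s, ∑ c ∈ insert u s,
      if a < b ∧ b < c then (x+a)*(x+b)*(x+c) else 0)
      = ∑ b ∈ s, ∑ c ∈ s, if a < b ∧ b < c then (x+a)*(x+b)*(x+c) else 0 := by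
    intro a ha
    rw [Finset.sum_insert hmem]
    have hz : (∑ c ∈ insert u s, if a < u ∧ u < c then (x+a)*(x+u)*(x+c) else 0) = 0 :=
      Finset.sum_eq_zero fun c _ => if_neg (fun hh => absurd hh.1 (not_lt.mpr (hu a ha).le))
    rw [hz, zero_add]
    apply Finset.sum_congr rfl
    intro b hb
    rw [Finset.sum_insert hmem, if_neg (fun hh => absurd hh.2 (not_lt.mpr (hu b hb).le)),
        zero_add]
  rw [Finset.sum_congr rfl h2]
  ring

private lemma icc_succ (n : ℕ) :
    Finset.Icc (-((n:ℤ)+1)) ((n:ℤ)+1)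
      = insert (-((n:ℤ)+1)) (insert ((n:ℤ)+1) (Finset.Icc (-(n:ℤ)) (n:ℤ))) := by
  ext t
  simp only [Finset.mem_Icc, Finset.mem_insert]
  omega

private lemma hv_max (n : ℕ) : ∀ t ∈ Finset.Icc (-(n:ℤ)) (n:ℤ), t < (n:ℤ)+1 := by
  intro t ht; rw [Finset.mem_Icc] at ht; omega

private lemma hu_min (n : ℕ) :
    ∀ t ∈ insert ((n:ℤ)+1) (Finset.Icc (-(n:ℤ)) (n:ℤ)), -((n:ℤ)+1) < t := by
  intro t ht
  rcases Finset.mem_insert.mp ht with h | h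
  · omega
  · rw [Finset.mem_Icc] at h; omega

private lemma hv_notmem (n : ℕ) : ((n:ℤ)+1) ∉ Finset.Icc (-(n:ℤ)) (n:ℤ) := by
  rw [Finset.mem_Icc]; omega

private lemma S1_Icc (x : ℤ) (y : ℕ) :
    S1 x (Finset.Icc (-(y:ℤ)) (y:ℤ)) = (2*(y:ℤ)+1)*x := by
  induction y with
  | zero => simp [S1]
  | succ n ih =>
    push_cast
    rw [icc_succ n, S1_insert, S1_insert x _ _ (hv_notmem n), ih]
    · ring
    · intro h
      rcases Finset.mem_insert.mp h with h | h
      · omega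
      · rw [Finset.mem_Icc] at h; omega

private lemma S2_Icc (x : ℤ) (y : ℕ) :
    6 * S2 x (Finset.Icc (-(y:ℤ)) (y:ℤ))
      = 6*(y:ℤ)*(2*y+1)*x^2 - y*(y+1)*(2*y+1) := by
  induction y with
  | zero => simp [S2]
  | succ n ih =>
    push_cast
    rw [icc_succ n, S2_insert_min x _ _ (hu_min n), S2_insert_max x _ _ (hv_max n),
        S1_insert x _ _ (hv_notmem n), S1_Icc]
    linear_combination ih

private lemma S3_Icc (x : ℤ) (y : ℕ) :
    6 * S3 x (Finset.Icc (-(y:ℤ)) (y:ℤ))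
      = (2*(y:ℤ)+1)*(2*y)*(2*(y:ℤ)-1)*x^3 - (y:ℤ)*(y+1)*(2*y+1)*(2*(y:ℤ)-1)*x := by
  induction y with
  | zero => simp [S3]
  | succ n ih =>
    push_cast
    rw [icc_succ n, S3_insert_min x _ _ (hu_min n), S3_insert_max x _ _ (hv_max n),
        S2_insert_max x _ _ (hv_max n), S1_Icc]
    linear_combination ih + (2*x + 0) * (S2_Icc x n)

private lemma c2a (y : ℕ) : (2*y+1).choose 2 = (2*y+1)*y := by
  rw [Nat.choose_two_right]
  have h : 2*y+1-1 = 2*y := by omega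
  rw [h, show (2*y+1)*(2*y) = ((2*y+1)*y)*2 by ring, Nat.mul_div_cancel _ (by norm_num)]

private lemma c2b (y : ℕ) : (2*y+2).choose 2 = (y+1)*(2*y+1) := by
  rw [Nat.choose_two_right]
  have h : 2*y+2-1 = 2*y+1 := by omega
  rw [h, show (2*y+2)*(2*y+1) = ((y+1)*(2*y+1))*2 by ring, Nat.mul_div_cancel _ (by norm_num)]

private lemma ch3 (y : ℕ) :
    ((2*y+1).choose 3 : ℤ) * 6 = (2*(y:ℤ)+1)*(2*y)*(2*(y:ℤ)-1) := by
  induction y with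
  | zero => decide
  | succ n ih =>
    rw [show 2*(n+1)+1 = (2*n+2)+1 from by ring, show (3:ℕ) = 2+1 from rfl,
        Nat.choose_succ_succ (2*n+2) 2,
        show 2*n+2 = (2*n+1)+1 from by ring, Nat.choose_succ_succ (2*n+1) 2,
        c2a n, c2b n]
    push_cast
    linear_combination ih

private lemma ch3' (y : ℕ) :
    ((2*y+2).choose 3 : ℤ) * 6 = (2*(y:ℤ)+2)*(2*y+1)*(2*y) := by
  rw [show (2*y+2 : ℕ) = (2*y+1)+1 from by ring, show (3:ℕ) = 2+1 from rfl,
      Nat.choose_succ_succ (2*y+1) 2, c2a y]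
  push_cast
  linear_combination ch3 y

private lemma ch4 (y : ℕ) :
    ((2*y+2).choose 4 : ℤ) * 6 = ((y:ℤ)+1)*y*(2*y+1)*(2*(y:ℤ)-1) := by
  induction y with
  | zero => decide
  | succ n ih =>
    rw [show 2*(n+1)+2 = (2*n+3)+1 from by ring, show (4:ℕ) = 3+1 from rfl,
        Nat.choose_succ_succ (2*n+3) 3,
        show 2*n+3 = (2*n+2)+1 from by ring, Nat.choose_succ_succ (2*n+2) 3,
        show 2*n+2+1 = 2*(n+1)+1 from by ring]
    push_cast
    have h1 := ch3 (n+1)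
    push_cast at h1
    have h2 := ch3' n
    linear_combination ih + h1 + h2

theorem stmt_6 (x : ℤ) (y : ℕ) (hy : 0 < y) :
    (∑ a ∈ Finset.Icc (-(y : ℤ)) (y : ℤ), ∑ b ∈ Finset.Icc (-(y : ℤ)) (y : ℤ),
        ∑ c ∈ Finset.Icc (-(y : ℤ)) (y : ℤ),
          if a < b ∧ b < c then (x + a) * (x + b) * (x + c) else 0) =
      (Nat.choose (2 * y + 1) 3 : ℤ) * x ^ 3 - (Nat.choose (2 * y + 2) 4 : ℤ) * x := by
  have key : (6:ℤ) * (∑ a ∈ Finset.Icc (-(y : ℤ)) (y : ℤ), ∑ b ∈ Finset.Icc (-(y : ℤ)) (y : ℤ),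
      ∑ c ∈ Finset.Icc (-(y : ℤ)) (y : ℤ),
        if a < b ∧ b < c then (x + a) * (x + b) * (x + c) else 0)
      = 6 * ((Nat.choose (2 * y + 1) 3 : ℤ) * x ^ 3 - (Nat.choose (2 * y + 2) 4 : ℤ) * x) := by
    rw [show (∑ a ∈ Finset.Icc (-(y : ℤ)) (y : ℤ), ∑ b ∈ Finset.Icc (-(y : ℤ)) (y : ℤ),
      ∑ c ∈ Finset.Icc (-(y : ℤ)) (y : ℤ),
        if a < b ∧ b < c then (x + a) * (x + b) * (x + c) else 0)
        = S3 x (Finset.Icc (-(y:ℤ)) (y:ℤ)) from rfl]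
    rw [S3_Icc x y]
    linear_combination (-(x^3)) * (ch3 y) + x * (ch4 y)
  exact mul_left_cancel₀ (by norm_num : (6:ℤ) ≠ 0) key
end

section
/- Let d ≥ 6 be an integer. For every integer k with 0 ≤ k ≤ ⌊(d+1)/2⌋ − 1, one has C^d_{d−3,k} = − Σ_{{i,j,l} ⊆ I_k} i·j·l + ( Σ_{i=1}^{k} i² ) · ( Σ_{i ∈ I_k} i ), where the first sum runs over all three-element subsets {i,j,l} of I_k (for k = 0 the second summand is 0). -/
section Aux

open Polynomial Finset

/- ### Ordered-sum insert lemmas -/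

private lemma T2_insert (f : ℕ → ℤ) (s : Finset ℕ) (a : ℕ) (ha : ∀ x ∈ s, x < a) :
    (∑ i ∈ insert a s, ∑ j ∈ insert a s, if i < j then f i * f j else 0)
      = (∑ i ∈ s, ∑ j ∈ s, if i < j then f i * f j else 0) + (∑ i ∈ s, f i) * f a := by
  have hna : a ∉ s := fun h => lt_irrefl a (ha a h)
  rw [Finset.sum_insert hna]
  have h1 : (∑ j ∈ insert a s, if a < j then f a * f j else 0) = 0 := by
    rw [Finset.sum_insert hna, if_neg (lt_irrefl a), Finset.sum_eq_zero, add_zero]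
    intro x hx
    exact if_neg (by exact fun h => absurd h (not_lt.mpr (le_of_lt (ha x hx))))
  rw [h1, zero_add]
  have h2 : ∀ i ∈ s, (∑ j ∈ insert a s, if i < j then f i * f j else 0)
      = f i * f a + ∑ j ∈ s, if i < j then f i * f j else 0 := by
    intro i hi
    rw [Finset.sum_insert hna, if_pos (ha i hi)]
  rw [Finset.sum_congr rfl h2, Finset.sum_add_distrib, ← Finset.sum_mul]
  ring

private lemma T3_insert (f : ℕ → ℤ) (s : Finset ℕ) (a : ℕ) (ha : ∀ x ∈ s, x < a) :
    (∑ i ∈ insert a s, ∑ j ∈ insert a s, ∑ l ∈ insert a s,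
        if i < j ∧ j < l then f i * f j * f l else 0)
      = (∑ i ∈ s, ∑ j ∈ s, ∑ l ∈ s, if i < j ∧ j < l then f i * f j * f l else 0)
        + (∑ i ∈ s, ∑ j ∈ s, if i < j then f i * f j else 0) * f a := by
  have hna : a ∉ s := fun h => lt_irrefl a (ha a h)
  rw [Finset.sum_insert hna]
  have hA : (∑ j ∈ insert a s, ∑ l ∈ insert a s,
      if a < j ∧ j < l then f a * f j * f l else 0) = 0 := by
    apply Finset.sum_eq_zero; intro j hj
    apply Finset.sum_eq_zero; intro l _
    apply if_neg
    rintro ⟨h1, _⟩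
    rcases Finset.mem_insert.mp hj with h' | hj'
    · subst h'; exact lt_irrefl _ h1
    · exact absurd h1 (not_lt.mpr (le_of_lt (ha j hj')))
  rw [hA, zero_add]
  have h2 : ∀ i ∈ s, (∑ j ∈ insert a s, ∑ l ∈ insert a s,
      if i < j ∧ j < l then f i * f j * f l else 0)
      = (∑ j ∈ s, if i < j then f i * f j else 0) * f a
        + ∑ j ∈ s, ∑ l ∈ s, if i < j ∧ j < l then f i * f j * f l else 0 := by
    intro i _
    rw [Finset.sum_insert hna]
    have hB : (∑ l ∈ insert a s, if i < a ∧ a < l then f i * f a * f l else 0) = 0 := by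
      apply Finset.sum_eq_zero; intro l hl
      apply if_neg; rintro ⟨_, h2'⟩
      rcases Finset.mem_insert.mp hl with h' | hl'
      · subst h'; exact lt_irrefl _ h2'
      · exact absurd h2' (not_lt.mpr (le_of_lt (ha l hl')))
    rw [hB, zero_add]
    have h3 : ∀ j ∈ s, (∑ l ∈ insert a s, if i < j ∧ j < l then f i * f j * f l else 0)
        = (if i < j then f i * f j else 0) * f a
          + ∑ l ∈ s, if i < j ∧ j < l then f i * f j * f l else 0 := by
      intro j hj
      rw [Finset.sum_insert hna]
      by_cases h : i < j
      · rw [if_pos ⟨h, ha j hj⟩, if_pos h]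
      · rw [if_neg (fun hc => h hc.1), if_neg h, zero_mul]
    rw [Finset.sum_congr rfl h3, Finset.sum_add_distrib, ← Finset.sum_mul]
  rw [Finset.sum_congr rfl h2, Finset.sum_add_distrib, ← Finset.sum_mul]
  ring

/- ### succ recursions for range sums -/

private lemma T1_succ (f : ℕ → ℤ) (m : ℕ) :
    (∑ i ∈ Finset.range (m+1), f i) = (∑ i ∈ Finset.range m, f i) + f m :=
  Finset.sum_range_succ f m

private lemma T2_succ (f : ℕ → ℤ) (m : ℕ) :
    (∑ i ∈ Finset.range (m+1), ∑ j ∈ Finset.range (m+1), if i < j then f i * f j else 0)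
      = (∑ i ∈ Finset.range m, ∑ j ∈ Finset.range m, if i < j then f i * f j else 0)
        + (∑ i ∈ Finset.range m, f i) * f m := by
  rw [Finset.range_add_one, T2_insert f _ _ (fun x hx => Finset.mem_range.mp hx)]

private lemma T3_succ (f : ℕ → ℤ) (m : ℕ) :
    (∑ i ∈ Finset.range (m+1), ∑ j ∈ Finset.range (m+1), ∑ l ∈ Finset.range (m+1),
        if i < j ∧ j < l then f i * f j * f l else 0)
      = (∑ i ∈ Finset.range m, ∑ j ∈ Finset.range m, ∑ l ∈ Finset.range m,
          if i < j ∧ j < l then f i * f j * f l else 0)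
        + (∑ i ∈ Finset.range m, ∑ j ∈ Finset.range m, if i < j then f i * f j else 0) * f m := by
  rw [Finset.range_add_one, T3_insert f _ _ (fun x hx => Finset.mem_range.mp hx)]

/- ### Coefficients of ∏ (X + C (f j)) -/

private lemma Q_natDegree_le (f : ℕ → ℤ) (d : ℕ) :
    (∏ j ∈ Finset.range d, (X + C (f j))).natDegree ≤ d := by
  refine le_trans (Polynomial.natDegree_prod_le _ _) ?_
  have : ∀ j ∈ Finset.range d, (X + C (f j)).natDegree = 1 := fun j _ => natDegree_X_add_C _
  rw [Finset.sum_congr rfl this]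
  simp

private lemma Q_coeff_hi (f : ℕ → ℤ) (d m : ℕ) (h : d < m) :
    (∏ j ∈ Finset.range d, (X + C (f j))).coeff m = 0 :=
  coeff_eq_zero_of_natDegree_lt (lt_of_le_of_lt (Q_natDegree_le f d) h)

private lemma Q_coeff_top (f : ℕ → ℤ) (d : ℕ) :
    (∏ j ∈ Finset.range d, (X + C (f j))).coeff d = 1 := by
  induction d with
  | zero => simp
  | succ n ih =>
    rw [Finset.prod_range_succ, mul_add, coeff_add, coeff_mul_X, coeff_mul_C, ih,
      Q_coeff_hi f n (n+1) (by omega)]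
    ring

private lemma Q_coeff_1 (f : ℕ → ℤ) (n : ℕ) :
    (∏ j ∈ Finset.range (n+1), (X + C (f j))).coeff n
      = ∑ i ∈ Finset.range (n+1), f i := by
  induction n with
  | zero => simp
  | succ n ih =>
    rw [Finset.prod_range_succ, mul_add, coeff_add, coeff_mul_X, coeff_mul_C, ih,
      Q_coeff_top, one_mul]
    conv_rhs => rw [Finset.sum_range_succ]

private lemma Q_coeff_2 (f : ℕ → ℤ) (n : ℕ) :
    (∏ j ∈ Finset.range (n+2), (X + C (f j))).coeff n
      = ∑ i ∈ Finset.range (n+2), ∑ j ∈ Finset.range (n+2),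
          if i < j then f i * f j else 0 := by
  induction n with
  | zero =>
    rw [Finset.prod_range_succ, Finset.prod_range_one]
    simp [Finset.sum_range_succ, coeff_zero_eq_eval_zero]
  | succ n ih =>
    rw [Finset.prod_range_succ, mul_add, coeff_add, coeff_mul_X, coeff_mul_C, ih,
      Q_coeff_1]
    conv_rhs => rw [show n + 1 + 2 = (n + 2) + 1 from rfl, T2_succ]

private lemma Q_coeff_3 (f : ℕ → ℤ) (n : ℕ) :
    (∏ j ∈ Finset.range (n+3), (X + C (f j))).coeff n
      = ∑ i ∈ Finset.range (n+3), ∑ j ∈ Finset.range (n+3), ∑ l ∈ Finset.range (n+3),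
          if i < j ∧ j < l then f i * f j * f l else 0 := by
  induction n with
  | zero =>
    rw [Finset.prod_range_succ, Finset.prod_range_succ, Finset.prod_range_one]
    simp [Finset.sum_range_succ, coeff_zero_eq_eval_zero]
  | succ n ih =>
    rw [Finset.prod_range_succ, mul_add, coeff_add, coeff_mul_X, coeff_mul_C, ih,
      Q_coeff_2]
    conv_rhs => rw [show n + 1 + 3 = (n + 3) + 1 from rfl, T3_succ]

/- ### Base case at d = 2k+1 : reflection symmetry -/

private lemma b1 (k : ℕ) : (∑ i ∈ Finset.range (2*k+1), ((k:ℤ) - i)) = 0 := by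
  have h := Finset.sum_range_reflect (fun i => (k:ℤ) - i) (2*k+1)
  have h2 : ∀ j ∈ Finset.range (2*k+1),
      ((k:ℤ) - ((2*k+1-1-j : ℕ) : ℤ)) = -((k:ℤ) - j) := by
    intro j hj
    have hj' : j < 2*k+1 := Finset.mem_range.mp hj
    have : ((2*k+1-1-j : ℕ) : ℤ) = 2*(k:ℤ) - j := by omega
    rw [this]; push_cast; ring
  rw [Finset.sum_congr rfl h2, Finset.sum_neg_distrib] at h
  linarith

private lemma sq_sum (n : ℕ) (f : ℕ → ℤ) :
    2 * (∑ i ∈ Finset.range n, ∑ j ∈ Finset.range n, if i < j then f i * f j else 0)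
      = (∑ i ∈ Finset.range n, f i)^2 - ∑ i ∈ Finset.range n, (f i)^2 := by
  have expand : (∑ i ∈ Finset.range n, f i)^2
      = ∑ i ∈ Finset.range n, ∑ j ∈ Finset.range n, f i * f j := by
    rw [sq, Finset.sum_mul_sum]
  have key : ∑ i ∈ Finset.range n, ∑ j ∈ Finset.range n, f i * f j
      = (∑ i ∈ Finset.range n, ∑ j ∈ Finset.range n, if i < j then f i * f j else 0)
        + ((∑ i ∈ Finset.range n, ∑ j ∈ Finset.range n, if j < i then f i * f j else 0)
          + ∑ i ∈ Finset.range n, ∑ j ∈ Finset.range n, if i = j then f i * f j else 0) := by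
    rw [← Finset.sum_add_distrib]
    rw [← Finset.sum_add_distrib]
    apply Finset.sum_congr rfl; intro i _
    rw [← Finset.sum_add_distrib, ← Finset.sum_add_distrib]
    apply Finset.sum_congr rfl; intro j _
    rcases lt_trichotomy i j with h | h | h
    · rw [if_pos h, if_neg (by omega), if_neg (by omega)]; ring
    · rw [if_neg (by omega), if_neg (by omega), if_pos h]; ring
    · rw [if_neg (by omega), if_pos h, if_neg (by omega)]; ring
  have diag : (∑ i ∈ Finset.range n, ∑ j ∈ Finset.range n, if i = j then f i * f j else 0)
      = ∑ i ∈ Finset.range n, (f i)^2 := by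
    apply Finset.sum_congr rfl; intro i hi
    rw [Finset.sum_ite_eq (Finset.range n) i (fun j => f i * f j), if_pos hi, sq]
  have swap : (∑ i ∈ Finset.range n, ∑ j ∈ Finset.range n, if j < i then f i * f j else 0)
      = ∑ i ∈ Finset.range n, ∑ j ∈ Finset.range n, if i < j then f i * f j else 0 := by
    rw [Finset.sum_comm]
    apply Finset.sum_congr rfl; intro i _
    apply Finset.sum_congr rfl; intro j _
    rw [mul_comm]
  rw [expand, key, diag, swap]
  ring

private lemma sumsq (k : ℕ) :
    (∑ i ∈ Finset.range (2*k+1), ((k:ℤ) - i)^2) = 2 * ∑ a ∈ Finset.Icc 1 k, (a:ℤ)^2 := by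
  induction k with
  | zero => simp
  | succ k ih =>
    rw [show 2*(k+1)+1 = (2*k+2)+1 from by ring, Finset.sum_range_succ, Finset.sum_range_succ']
    have h1 : ∀ i ∈ Finset.range (2*k+1),
        (((k+1:ℕ):ℤ) - ((i+1:ℕ):ℤ))^2 = ((k:ℤ) - i)^2 := by
      intro i _
      push_cast; ring
    rw [Finset.sum_congr rfl h1, ih, Finset.sum_Icc_succ_top (by omega : 1 ≤ k+1)]
    push_cast; ring

private lemma b2 (k : ℕ) :
    (∑ i ∈ Finset.range (2*k+1), ∑ j ∈ Finset.range (2*k+1),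
        if i < j then ((k:ℤ) - i) * ((k:ℤ) - j) else 0)
      = -(∑ a ∈ Finset.Icc 1 k, (a:ℤ)^2) := by
  have h := sq_sum (2*k+1) (fun i => (k:ℤ) - i)
  rw [b1, sumsq] at h
  linarith

private lemma sum3_comm (s : Finset ℕ) (g : ℕ → ℕ → ℕ → ℤ) :
    (∑ i ∈ s, ∑ j ∈ s, ∑ l ∈ s, g i j l) = ∑ l ∈ s, ∑ j ∈ s, ∑ i ∈ s, g i j l := by
  rw [Finset.sum_comm]
  rw [show (∑ j ∈ s, ∑ i ∈ s, ∑ l ∈ s, g i j l) = ∑ j ∈ s, ∑ l ∈ s, ∑ i ∈ s, g i j l from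
    Finset.sum_congr rfl fun j _ => Finset.sum_comm]
  rw [Finset.sum_comm]

private lemma b3 (k : ℕ) :
    (∑ i ∈ Finset.range (2*k+1), ∑ j ∈ Finset.range (2*k+1), ∑ l ∈ Finset.range (2*k+1),
        if i < j ∧ j < l then ((k:ℤ)-i)*((k:ℤ)-j)*((k:ℤ)-l) else 0) = 0 := by
  set F : ℕ → ℕ → ℕ → ℤ :=
    fun i j l => if i < j ∧ j < l then ((k:ℤ)-i)*((k:ℤ)-j)*((k:ℤ)-l) else 0 with hF
  set G : ℕ → ℕ → ℕ → ℤ :=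
    fun i j l => if l < j ∧ j < i then ((k:ℤ)-i)*((k:ℤ)-j)*((k:ℤ)-l) else 0 with hG
  have s1 : ∀ a b : ℕ, (∑ l ∈ Finset.range (2*k+1), F a b (2*k+1-1-l))
      = ∑ l ∈ Finset.range (2*k+1), F a b l :=
    fun a b => Finset.sum_range_reflect (fun l => F a b l) (2*k+1)
  have s2 : ∀ a : ℕ, (∑ j ∈ Finset.range (2*k+1), ∑ l ∈ Finset.range (2*k+1), F a (2*k+1-1-j) l)
      = ∑ j ∈ Finset.range (2*k+1), ∑ l ∈ Finset.range (2*k+1), F a j l :=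
    fun a => Finset.sum_range_reflect (fun j => ∑ l ∈ Finset.range (2*k+1), F a j l) (2*k+1)
  have s3 : (∑ i ∈ Finset.range (2*k+1), ∑ j ∈ Finset.range (2*k+1), ∑ l ∈ Finset.range (2*k+1),
      F (2*k+1-1-i) j l)
      = ∑ i ∈ Finset.range (2*k+1), ∑ j ∈ Finset.range (2*k+1), ∑ l ∈ Finset.range (2*k+1), F i j l :=
    Finset.sum_range_reflect
      (fun i => ∑ j ∈ Finset.range (2*k+1), ∑ l ∈ Finset.range (2*k+1), F i j l) (2*k+1)
  have refl3 : (∑ i ∈ Finset.range (2*k+1), ∑ j ∈ Finset.range (2*k+1), ∑ l ∈ Finset.range (2*k+1),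
      F (2*k+1-1-i) (2*k+1-1-j) (2*k+1-1-l))
      = ∑ i ∈ Finset.range (2*k+1), ∑ j ∈ Finset.range (2*k+1), ∑ l ∈ Finset.range (2*k+1),
        F i j l := by
    calc (∑ i ∈ Finset.range (2*k+1), ∑ j ∈ Finset.range (2*k+1), ∑ l ∈ Finset.range (2*k+1),
        F (2*k+1-1-i) (2*k+1-1-j) (2*k+1-1-l))
        = ∑ i ∈ Finset.range (2*k+1), ∑ j ∈ Finset.range (2*k+1), ∑ l ∈ Finset.range (2*k+1),
          F (2*k+1-1-i) (2*k+1-1-j) l := by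
          refine Finset.sum_congr rfl fun i _ => Finset.sum_congr rfl fun j _ => s1 _ _
      _ = ∑ i ∈ Finset.range (2*k+1), ∑ j ∈ Finset.range (2*k+1), ∑ l ∈ Finset.range (2*k+1),
          F (2*k+1-1-i) j l := Finset.sum_congr rfl fun i _ => s2 _
      _ = _ := s3
  have point : ∀ i ∈ Finset.range (2*k+1), ∀ j ∈ Finset.range (2*k+1), ∀ l ∈ Finset.range (2*k+1),
      F (2*k+1-1-i) (2*k+1-1-j) (2*k+1-1-l) = -(G i j l) := by
    intro i hi j hj l hl
    have hi' : i < 2*k+1 := Finset.mem_range.mp hi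
    have hj' : j < 2*k+1 := Finset.mem_range.mp hj
    have hl' : l < 2*k+1 := Finset.mem_range.mp hl
    simp only [hF, hG]
    have e1 : ((2*k+1-1-i : ℕ):ℤ) = 2*(k:ℤ) - i := by omega
    have e2 : ((2*k+1-1-j : ℕ):ℤ) = 2*(k:ℤ) - j := by omega
    have e3 : ((2*k+1-1-l : ℕ):ℤ) = 2*(k:ℤ) - l := by omega
    by_cases hc : l < j ∧ j < i
    · rw [if_pos (show 2*k+1-1-i < 2*k+1-1-j ∧ 2*k+1-1-j < 2*k+1-1-l by omega),
        if_pos hc, e1, e2, e3]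
      ring
    · rw [if_neg (show ¬(2*k+1-1-i < 2*k+1-1-j ∧ 2*k+1-1-j < 2*k+1-1-l) by omega),
        if_neg hc]
      ring
  have hGF : (∑ i ∈ Finset.range (2*k+1), ∑ j ∈ Finset.range (2*k+1), ∑ l ∈ Finset.range (2*k+1),
      G i j l)
      = ∑ i ∈ Finset.range (2*k+1), ∑ j ∈ Finset.range (2*k+1), ∑ l ∈ Finset.range (2*k+1),
        F i j l := by
    rw [sum3_comm]
    refine Finset.sum_congr rfl fun a _ => Finset.sum_congr rfl fun b _ =>
      Finset.sum_congr rfl fun c _ => ?_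
    simp only [hF, hG]
    by_cases hc : a < b ∧ b < c
    · rw [if_pos hc, if_pos hc]; ring
    · rw [if_neg hc, if_neg hc]
  have hkey : (∑ i ∈ Finset.range (2*k+1), ∑ j ∈ Finset.range (2*k+1), ∑ l ∈ Finset.range (2*k+1),
      F i j l)
      = -(∑ i ∈ Finset.range (2*k+1), ∑ j ∈ Finset.range (2*k+1), ∑ l ∈ Finset.range (2*k+1),
        F i j l) := by
    conv_lhs => rw [← refl3]
    rw [Finset.sum_congr rfl fun i hi => Finset.sum_congr rfl fun j hj =>
      Finset.sum_congr rfl fun l hl => point i hi j hj l hl]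
    simp only [Finset.sum_neg_distrib]
    rw [hGF]
  linarith

/- ### Main induction on d -/

private lemma p123 (k d : ℕ) (hd : 2*k+1 ≤ d) :
    ((∑ i ∈ Finset.range d, ((k:ℤ) - i)) = -(∑ b ∈ Finset.Icc (k+1) (d-k-1), (b:ℤ)))
    ∧ ((∑ i ∈ Finset.range d, ∑ j ∈ Finset.range d,
          if i < j then ((k:ℤ)-i)*((k:ℤ)-j) else 0)
        = -(∑ a ∈ Finset.Icc 1 k, (a:ℤ)^2)
          + ∑ b ∈ Finset.Icc (k+1) (d-k-1), ∑ b' ∈ Finset.Icc (k+1) (d-k-1),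
              if b < b' then (b:ℤ)*(b':ℤ) else 0)
    ∧ ((∑ i ∈ Finset.range d, ∑ j ∈ Finset.range d, ∑ l ∈ Finset.range d,
          if i < j ∧ j < l then ((k:ℤ)-i)*((k:ℤ)-j)*((k:ℤ)-l) else 0)
        = -(∑ i ∈ Finset.Icc (k+1) (d-k-1), ∑ j ∈ Finset.Icc (k+1) (d-k-1),
              ∑ l ∈ Finset.Icc (k+1) (d-k-1),
                if i < j ∧ j < l then (i:ℤ)*(j:ℤ)*(l:ℤ) else 0)
          + (∑ a ∈ Finset.Icc 1 k, (a:ℤ)^2) * (∑ b ∈ Finset.Icc (k+1) (d-k-1), (b:ℤ))) := by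
  induction d, hd using Nat.le_induction with
  | base =>
    have he : Finset.Icc (k+1) (2*k+1-k-1) = ∅ := Finset.Icc_eq_empty (by omega)
    rw [he]
    simp only [Finset.sum_empty, neg_zero, add_zero, mul_zero]
    exact ⟨b1 k, by simpa using b2 k, by simpa using b3 k⟩
  | succ d hd ih =>
    obtain ⟨ih1, ih2, ih3⟩ := ih
    have hins : Finset.Icc (k+1) (d+1-k-1) = insert (d-k) (Finset.Icc (k+1) (d-k-1)) := by
      ext x; simp only [Finset.mem_Icc, Finset.mem_insert]; omega
    have hlt : ∀ x ∈ Finset.Icc (k+1) (d-k-1), x < d-k := by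
      intro x hx; have := Finset.mem_Icc.mp hx; omega
    have hnot : (d-k) ∉ Finset.Icc (k+1) (d-k-1) := fun h => lt_irrefl _ (hlt _ h)
    have hdk : ((d-k:ℕ):ℤ) = (d:ℤ) - k := by omega
    refine ⟨?_, ?_, ?_⟩
    · rw [Finset.sum_range_succ, ih1, hins, Finset.sum_insert hnot, hdk]
      push_cast
      ring
    · rw [T2_succ, ih2, ih1, hins, T2_insert (fun b => (b:ℤ)) _ _ hlt, hdk]
      push_cast
      ring
    · rw [T3_succ, ih3, ih2, hins, T3_insert (fun b => (b:ℤ)) _ _ hlt,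
        Finset.sum_insert hnot, hdk]
      push_cast
      ring


end Aux

theorem stmt_7 (d : ℕ) (hd : 6 ≤ d) (k : ℕ) (hk : k ≤ (d + 1) / 2 - 1) :
    coefC d (d - 3) (k : ℤ) =
      -(∑ i ∈ Finset.Icc (k + 1) (d - k - 1), ∑ j ∈ Finset.Icc (k + 1) (d - k - 1),
          ∑ l ∈ Finset.Icc (k + 1) (d - k - 1),
            if i < j ∧ j < l then (i : ℤ) * (j : ℤ) * (l : ℤ) else 0) +
        (∑ i ∈ Finset.Icc 1 k, (i : ℤ) ^ 2) *
          (∑ i ∈ Finset.Icc (k + 1) (d - k - 1), (i : ℤ)) := by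
  have h2k : 2*k+1 ≤ d := by omega
  obtain ⟨n, rfl⟩ : ∃ n, d = n + 3 := ⟨d - 3, by omega⟩
  have key := (p123 k (n+3) h2k).2.2
  show (∏ j ∈ Finset.range (n+3),
      (Polynomial.X + Polynomial.C ((k:ℤ) - (j:ℤ)))).coeff (n+3-3) = _
  rw [show n+3-3 = n from rfl, Q_coeff_3 (fun j => (k:ℤ) - j) n]
  exact key
end

section
/- Let d ≥ 7 be an integer. For every integer k with 1 ≤ k ≤ ⌊(d−4)/2⌋, one has C^d_{d−3,k} = − (d−2)(d−1)·d·(d−2k−1)·(4k² − 4dk + 4k + d² − 3d) / 48. -/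
open Finset

section esymm

variable (f : ℕ → ℤ)

lemma esucc (a : ℕ) (s : Finset ℕ) (ha : a ∉ s) (m : ℕ) :
    ∑ t ∈ (insert a s).powersetCard (m + 1), ∏ j ∈ t, f j =
      (∑ t ∈ s.powersetCard (m + 1), ∏ j ∈ t, f j) +
        f a * ∑ t ∈ s.powersetCard m, ∏ j ∈ t, f j := by
  rw [Finset.powersetCard_succ_insert ha, Finset.sum_union, Finset.sum_image]
  · rw [Finset.mul_sum]
    congr 1
    refine Finset.sum_congr rfl fun t ht => ?_
    rw [Finset.prod_insert]
    intro hat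
    exact ha ((Finset.mem_powersetCard.mp ht).1 hat)
  · intro t ht u hu h
    have hat : a ∉ t := fun h' => ha ((Finset.mem_powersetCard.mp ht).1 h')
    have hau : a ∉ u := fun h' => ha ((Finset.mem_powersetCard.mp hu).1 h')
    have := congrArg (Finset.erase · a) h
    simpa [Finset.erase_insert hat, Finset.erase_insert hau] using this
  · rw [Finset.disjoint_left]
    intro t ht hti
    obtain ⟨u, hu, rfl⟩ := Finset.mem_image.mp hti
    exact ha ((Finset.mem_powersetCard.mp ht).1 (Finset.mem_insert_self a u))

lemma e123 (s : Finset ℕ) :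
    (∑ t ∈ s.powersetCard 1, ∏ j ∈ t, f j) = (∑ j ∈ s, f j) ∧
    2 * (∑ t ∈ s.powersetCard 2, ∏ j ∈ t, f j) =
      (∑ j ∈ s, f j) ^ 2 - (∑ j ∈ s, f j ^ 2) ∧
    6 * (∑ t ∈ s.powersetCard 3, ∏ j ∈ t, f j) =
      (∑ j ∈ s, f j) ^ 3 - 3 * (∑ j ∈ s, f j) * (∑ j ∈ s, f j ^ 2) +
        2 * (∑ j ∈ s, f j ^ 3) := by
  induction s using Finset.induction_on with
  | empty =>
    refine ⟨?_, ?_, ?_⟩ <;>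
      · rw [show (∅ : Finset ℕ) = Finset.range 0 by simp, Finset.powersetCard_eq_empty.mpr (by simp)] <;> simp
  | @insert a s ha ih =>
    obtain ⟨h1, h2, h3⟩ := ih
    have e0 : (∑ t ∈ s.powersetCard 0, ∏ j ∈ t, f j) = 1 := by simp
    rw [Finset.sum_insert ha, Finset.sum_insert ha, Finset.sum_insert ha,
      esucc f a s ha 0, esucc f a s ha 1, esucc f a s ha 2, e0]
    simp only [show (1:ℕ)+1 = 2 from rfl, show (2:ℕ)+1 = 3 from rfl]
    exact ⟨by linarith, by linear_combination h2 + 2 * f a * h1, by linear_combination h3 + 3 * f a * h2⟩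

end esymm

section power_sums

variable (k : ℕ)

lemma S1_s8 (d : ℕ) : ∑ j ∈ range d, ((k : ℚ) - j) = d * k - d * (d - 1) / 2 := by
  induction d with
  | zero => simp
  | succ d ih => rw [Finset.sum_range_succ, ih]; push_cast; ring

lemma S2_s8 (d : ℕ) : ∑ j ∈ range d, ((k : ℚ) - j) ^ 2 =
    d * k ^ 2 - 2 * k * (d * (d - 1) / 2) + d * (d - 1) * (2 * d - 1) / 6 := by
  induction d with
  | zero => simp
  | succ d ih => rw [Finset.sum_range_succ, ih]; push_cast; ring

lemma S3_s8 (d : ℕ) : ∑ j ∈ range d, ((k : ℚ) - j) ^ 3 =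
    d * k ^ 3 - 3 * k ^ 2 * (d * (d - 1) / 2) + 3 * k * (d * (d - 1) * (2 * d - 1) / 6)
      - (d * (d - 1) / 2) ^ 2 := by
  induction d with
  | zero => simp
  | succ d ih => rw [Finset.sum_range_succ, ih]; push_cast; ring

end power_sums


theorem stmt_8 (d : ℕ) (hd : 7 ≤ d) (k : ℕ) (hk1 : 1 ≤ k) (hk2 : k ≤ (d - 4) / 2) :
    (coefC d (d - 3) (k : ℤ) : ℚ) =
      -(((d : ℚ) - 2) * ((d : ℚ) - 1) * (d : ℚ) * ((d : ℚ) - 2 * (k : ℚ) - 1) *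
          (4 * (k : ℚ) ^ 2 - 4 * (d : ℚ) * (k : ℚ) + 4 * (k : ℚ) + (d : ℚ) ^ 2 - 3 * (d : ℚ))) /
        48 := by
  have hle : d - 3 ≤ #(Finset.range d) := by rw [Finset.card_range]; omega
  have hcard : #(Finset.range d) - (d - 3) = 3 := by rw [Finset.card_range]; omega
  have hcoef : coefC d (d - 3) (k : ℤ) =
      ∑ t ∈ (Finset.range d).powersetCard 3, ∏ j ∈ t, ((k : ℤ) - j) := by
    unfold coefC
    rw [Finset.prod_X_add_C_coeff _ _ hle, hcard]
  have hE := (e123 (fun j => (k : ℤ) - j) (Finset.range d)).2.2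
  have hQ := congrArg (fun x : ℤ => (x : ℚ)) hE
  push_cast at hQ
  rw [S1_s8, S2_s8, S3_s8] at hQ
  rw [hcoef]
  push_cast
  linear_combination hQ / 6
end

section
/- Let d ≥ 7 be an integer. For every integer k with 0 ≤ k ≤ ⌊(d+1)/2⌋ − 2: if C^d_{d−3,k} ≤ 0 then C^d_{d−3,k+1} ≥ C^d_{d−3,k}, and if C^d_{d−3,k} ≥ 0 then C^d_{d−3,k+1} ≥ 0. -/
open Polynomial Finset

noncomputable def Q (n : ℕ) (i : ℤ) : ℤ[X] := ∏ j ∈ range n, (X + C (i - (j : ℤ)))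

lemma Q_monic (n : ℕ) (i : ℤ) : (Q n i).Monic :=
  monic_prod_of_monic _ _ (fun _ _ => monic_X_add_C _)

lemma Q_natDegree (n : ℕ) (i : ℤ) : (Q n i).natDegree = n := by
  rw [Q, natDegree_prod _ _ (fun j _ => (monic_X_add_C _).ne_zero)]
  simp only [natDegree_X_add_C, sum_const, card_range, smul_eq_mul, mul_one]

lemma coeff_step (p : ℤ[X]) (a : ℤ) (k : ℕ) :
    (p * (X + C a)).coeff (k+1) = p.coeff k + a * p.coeff (k+1) := by
  rw [mul_add, coeff_add, coeff_mul_X, coeff_mul_C, mul_comm]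

lemma coeff_step0 (p : ℤ[X]) (a : ℤ) :
    (p * (X + C a)).coeff 0 = a * p.coeff 0 := by
  rw [mul_coeff_zero, coeff_add, coeff_X_zero, coeff_C_zero, zero_add, mul_comm]

lemma key (m : ℕ) (i : ℤ) :
    2 * (Q (m+3) i).coeff (m+2) = 2*((m:ℤ)+3)*i - ((m:ℤ)+3)^2 + ((m:ℤ)+3) ∧
    24 * (Q (m+3) i).coeff (m+1) =
      3*(2*((m:ℤ)+3)*i - ((m:ℤ)+3)^2 + ((m:ℤ)+3))^2 - 12*((m:ℤ)+3)*i^2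
        + 12*((m:ℤ)+3)*((m:ℤ)+2)*i - 2*((m:ℤ)+3)*((m:ℤ)+2)*(2*((m:ℤ)+3)-1) ∧
    48 * (Q (m+3) i).coeff m =
      ((m:ℤ)+3)*((m:ℤ)+2)*((m:ℤ)+1)*((2*i-((m:ℤ)+3)+1)^3 - (((m:ℤ)+3)+1)*(2*i-((m:ℤ)+3)+1)) := by
  induction m with
  | zero =>
    have h3 : Q 3 i = C ((i-1)*(i-2)*i) + C ((i-1)*(i-2) + i*(i-1) + i*(i-2)) * X
        + C (i + (i-1) + (i-2)) * X^2 + X^3 := by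
      rw [Q, prod_range_succ, prod_range_succ, prod_range_one]
      push_cast [sub_zero]
      simp only [map_mul, map_add, map_sub, map_one, map_ofNat]
      ring
    refine ⟨?_, ?_, ?_⟩ <;>
    · rw [h3]
      simp only [coeff_add, coeff_C_mul, coeff_X_pow, coeff_C, coeff_X]
      norm_num
      ring
  | succ m ih =>
    obtain ⟨h1, h2, h3⟩ := ih
    have hQ : Q (m+4) i = Q (m+3) i * (X + C (i - ((m:ℤ)+3))) := by
      rw [Q, Q, prod_range_succ]
      push_cast
      ring_nf
    have htop : (Q (m+3) i).coeff (m+3) = 1 := by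
      have := (Q_monic (m+3) i).coeff_natDegree
      rwa [Q_natDegree] at this
    refine ⟨?_, ?_, ?_⟩
    · rw [show m+1+2 = (m+2)+1 from rfl, hQ, coeff_step, show m+2+1 = m+3 from rfl, htop]
      push_cast
      linear_combination h1
    · rw [show m+1+1 = (m+1)+1 from rfl, hQ, coeff_step, show m+1+1 = m+2 from rfl]
      push_cast
      linear_combination h2 + 12*(i - ((m:ℤ)+3))*h1
    · rw [hQ, coeff_step]
      push_cast
      linear_combination h3 + 2*(i - ((m:ℤ)+3))*h2

lemma coefC_formula (d : ℕ) (hd : 3 ≤ d) (i : ℤ) :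
    48 * coefC d (d-3) i =
      (d:ℤ)*((d:ℤ)-1)*((d:ℤ)-2)*((2*i-(d:ℤ)+1)^3 - ((d:ℤ)+1)*(2*i-(d:ℤ)+1)) := by
  obtain ⟨m, rfl⟩ : ∃ m, d = m + 3 := ⟨d - 3, by omega⟩
  have h := (key m i).2.2
  rw [show m+3-3 = m from rfl]
  rw [show coefC (m+3) m i = (Q (m+3) i).coeff m from rfl, h]
  push_cast
  ring

set_option maxHeartbeats 1000000 in
theorem stmt_10 (d : ℕ) (hd : 7 ≤ d) (k : ℕ) (hk : k ≤ (d + 1) / 2 - 2) :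
    (coefC d (d - 3) (k : ℤ) ≤ 0 → coefC d (d - 3) ((k : ℤ) + 1) ≥ coefC d (d - 3) (k : ℤ)) ∧
    (coefC d (d - 3) (k : ℤ) ≥ 0 → coefC d (d - 3) ((k : ℤ) + 1) ≥ 0) := by
  have hkd : 2 * k + 3 ≤ d := by omega
  have hn : (7:ℤ) ≤ (d:ℤ) := by exact_mod_cast hd
  obtain ⟨t, ht⟩ : ∃ t : ℤ, t = 2 * (k:ℤ) - (d:ℤ) + 1 := ⟨_, rfl⟩
  have ht2 : t ≤ -2 := by omega
  have hfk := coefC_formula d (by omega) (k : ℤ)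
  have hfk1 := coefC_formula d (by omega) ((k : ℤ) + 1)
  have hfk' : 48 * coefC d (d-3) (k:ℤ) =
      (d:ℤ)*((d:ℤ)-1)*((d:ℤ)-2) * (t^3 - ((d:ℤ)+1)*t) := by
    rw [ht]; linear_combination hfk
  have hfk1' : 48 * coefC d (d-3) ((k:ℤ)+1) =
      (d:ℤ)*((d:ℤ)-1)*((d:ℤ)-2) * ((t+2)^3 - ((d:ℤ)+1)*(t+2)) := by
    rw [ht]; linear_combination hfk1
  have hP : (0:ℤ) < (d:ℤ)*((d:ℤ)-1)*((d:ℤ)-2) :=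
    mul_pos (mul_pos (by linarith) (by linarith)) (by linarith)
  constructor
  · intro h
    have h48 : (d:ℤ)*((d:ℤ)-1)*((d:ℤ)-2) * (t^3 - ((d:ℤ)+1)*t) ≤ 0 := by
      rw [← hfk']; linarith
    have hg : t^3 - ((d:ℤ)+1)*t ≤ 0 := by
      by_contra hc
      push_neg at hc
      nlinarith [mul_pos hP hc]
    have hsq : (d:ℤ) + 1 ≤ t^2 := by
      by_contra hc
      push_neg at hc
      nlinarith [mul_nonneg (by linarith : (0:ℤ) ≤ -t)
        (by linarith : (0:ℤ) ≤ (d:ℤ) + 1 - t^2)]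
    have ht3 : t ≤ -3 := by
      by_contra hc
      have he : t = -2 := by omega
      rw [he] at hsq
      norm_num at hsq
      linarith
    have hdiff : (0:ℤ) ≤ ((t+2)^3 - ((d:ℤ)+1)*(t+2)) - (t^3 - ((d:ℤ)+1)*t) := by
      nlinarith [mul_nonneg (by linarith : (0:ℤ) ≤ -t-3) (by linarith : (0:ℤ) ≤ -t)]
    have hmul := mul_nonneg hP.le hdiff
    have hring : (d:ℤ)*((d:ℤ)-1)*((d:ℤ)-2) *
          (((t+2)^3 - ((d:ℤ)+1)*(t+2)) - (t^3 - ((d:ℤ)+1)*t))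
        = (d:ℤ)*((d:ℤ)-1)*((d:ℤ)-2) * ((t+2)^3 - ((d:ℤ)+1)*(t+2))
          - (d:ℤ)*((d:ℤ)-1)*((d:ℤ)-2) * (t^3 - ((d:ℤ)+1)*t) := by ring
    rw [hring] at hmul
    linarith [hfk', hfk1']
  · intro h
    have h48 : 0 ≤ (d:ℤ)*((d:ℤ)-1)*((d:ℤ)-2) * (t^3 - ((d:ℤ)+1)*t) := by
      rw [← hfk']; linarith
    have hg : 0 ≤ t^3 - ((d:ℤ)+1)*t := by
      by_contra hc
      push_neg at hc
      nlinarith [mul_pos hP (by linarith : (0:ℤ) < -(t^3 - ((d:ℤ)+1)*t))]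
    have hsq : t^2 ≤ (d:ℤ) + 1 := by
      by_contra hc
      push_neg at hc
      nlinarith [mul_nonneg (by linarith : (0:ℤ) ≤ -t)
        (by linarith : (0:ℤ) ≤ t^2 - ((d:ℤ)+1))]
    have hnext : (0:ℤ) ≤ (t+2)^3 - ((d:ℤ)+1)*(t+2) := by
      nlinarith [mul_nonneg (by linarith : (0:ℤ) ≤ -(t+2))
        (by nlinarith : (0:ℤ) ≤ ((d:ℤ)+1) - (t+2)^2)]
    have hmul := mul_nonneg hP.le hnext
    linarith [hfk1']
end

section
/- Let d ≥ 7 be an integer. Then N_{d−3,d} < 0, i.e., min{ C^d_{d−3,i} : ⌈(d−1)/2⌉ ≤ i ≤ d−2 } < 0. -/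
open Polynomial

noncomputable def Pprod (i : ℤ) (d : ℕ) : Polynomial ℤ :=
  ∏ j ∈ Finset.range d, (Polynomial.X + Polynomial.C (i - (j : ℤ)))

lemma coeff_mul_XC (p : Polynomial ℤ) (a : ℤ) (n : ℕ) :
    (p * (X + C a)).coeff (n+1) = p.coeff n + p.coeff (n+1) * a := by
  rw [mul_add, coeff_add, coeff_mul_X, coeff_mul_C]

lemma cm0 (p : Polynomial ℤ) (a : ℤ) : (p * (X + C a)).coeff 0 = p.coeff 0 * a := by
  rw [mul_coeff_zero]; simp

lemma cm1 (p : Polynomial ℤ) (a : ℤ) : (p * (X + C a)).coeff 1 = p.coeff 0 + p.coeff 1 * a := by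
  have := coeff_mul_XC p a 0; norm_num at this; exact this

lemma cm2 (p : Polynomial ℤ) (a : ℤ) : (p * (X + C a)).coeff 2 = p.coeff 1 + p.coeff 2 * a := by
  have := coeff_mul_XC p a 1; norm_num at this; exact this

lemma cm3 (p : Polynomial ℤ) (a : ℤ) : (p * (X + C a)).coeff 3 = p.coeff 2 + p.coeff 3 * a := by
  have := coeff_mul_XC p a 2; norm_num at this; exact this

lemma cA0 (a : ℤ) : ((X + C a) : Polynomial ℤ).coeff 0 = a := by simp
lemma cA1 (a : ℤ) : ((X + C a) : Polynomial ℤ).coeff 1 = 1 := by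
  rw [coeff_add, coeff_X, coeff_C]; norm_num
lemma cA2 (a : ℤ) : ((X + C a) : Polynomial ℤ).coeff 2 = 0 := by
  rw [coeff_add, coeff_X, coeff_C]; norm_num
lemma cA3 (a : ℤ) : ((X + C a) : Polynomial ℤ).coeff 3 = 0 := by
  rw [coeff_add, coeff_X, coeff_C]; norm_num

lemma deg_Pprod (i : ℤ) (d : ℕ) : (Pprod i d).natDegree ≤ d := by
  refine (Polynomial.natDegree_prod_le _ _).trans ?_
  have h : ∀ j ∈ Finset.range d, (X + C (i - (j:ℤ))).natDegree = 1 :=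
    fun j _ => natDegree_X_add_C _
  rw [Finset.sum_congr rfl h]
  simp

def Afun (d i : ℤ) : ℤ := d + 2*d*i - d^2
def Bfun (d i : ℤ) : ℤ :=
  -2*d - 12*d*i - 12*d*i^2 + 9*d^2 + 24*d^2*i + 12*d^2*i^2 - 10*d^3 - 12*d^3*i + 3*d^4
def Gfun (d i : ℤ) : ℤ :=
  8*d*i + 24*d*i^2 + 16*d*i^3 - 6*d^2 - 40*d^2*i - 60*d^2*i^2 - 24*d^2*i^3
  + 17*d^3 + 58*d^3*i + 48*d^3*i^2 + 8*d^3*i^3 - 17*d^4 - 32*d^4*i - 12*d^4*i^2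
  + 7*d^5 + 6*d^5*i - d^6

lemma main (i : ℤ) (k : ℕ) :
    (Pprod i (k+3)).coeff (k+3) = 1 ∧
    2 * (Pprod i (k+3)).coeff (k+2) = Afun ((k:ℤ)+3) i ∧
    24 * (Pprod i (k+3)).coeff (k+1) = Bfun ((k:ℤ)+3) i ∧
    48 * (Pprod i (k+3)).coeff k = Gfun ((k:ℤ)+3) i := by
  induction k with
  | zero =>
    have h3 : Pprod i 3 = ((X + C (i - 0)) * (X + C (i - 1))) * (X + C (i - 2)) := by
      simp only [Pprod, Finset.prod_range_succ, Finset.prod_range_zero, one_mul,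
        Nat.cast_zero, Nat.cast_one, Nat.cast_ofNat]
    simp only [Nat.zero_add, Nat.cast_zero, zero_add, Afun, Bfun, Gfun]
    refine ⟨?_, ?_, ?_, ?_⟩ <;>
      · rw [h3]
        simp only [cm0, cm1, cm2, cm3, cA0, cA1, cA2, cA3]
        ring
  | succ k ih =>
    obtain ⟨h0, h1, h2, h3⟩ := ih
    have hP : Pprod i (k+1+3) = Pprod i (k+3) * (X + C (i - ((k:ℤ)+3))) := by
      have hkk : k+1+3 = (k+3)+1 := by omega
      rw [hkk, Pprod, Finset.prod_range_succ]
      push_cast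
      rfl
    have hz : (Pprod i (k+3)).coeff (k+3+1) = 0 := by
      apply coeff_eq_zero_of_natDegree_lt
      have := deg_Pprod i (k+3)
      omega
    simp only [Afun, Bfun, Gfun] at h1 h2 h3 ⊢
    refine ⟨?_, ?_, ?_, ?_⟩
    · show (Pprod i (k+1+3)).coeff (k+3+1) = 1
      rw [hP, coeff_mul_XC, hz, h0]; ring
    · show 2 * (Pprod i (k+1+3)).coeff (k+2+1) = _
      rw [hP, coeff_mul_XC]
      push_cast
      linear_combination h1 + (2*(i - ((k:ℤ)+3))) * h0
    · show 24 * (Pprod i (k+1+3)).coeff (k+1+1) = _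
      rw [hP, coeff_mul_XC]
      push_cast
      linear_combination h2 + (12*(i - ((k:ℤ)+3))) * h1
    · show 48 * (Pprod i (k+1+3)).coeff (k+0+1) = _
      rw [hP, coeff_mul_XC]
      push_cast
      linear_combination h3 + (2*(i - ((k:ℤ)+3))) * h2

lemma coefC_eq (d : ℕ) (hd : 3 ≤ d) (i : ℤ) :
    48 * coefC d (d-3) i = Gfun (d:ℤ) i := by
  obtain ⟨k, rfl⟩ : ∃ k, d = k + 3 := ⟨d-3, by omega⟩
  have h := (main i k).2.2.2
  have hk : k + 3 - 3 = k := by omega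
  rw [coefC, hk]
  rw [Pprod] at h
  push_cast
  convert h using 3

theorem stmt_11 (d : ℕ) (hd : 7 ≤ d) : Nrd d (d - 3) < 0 := by
  set S := {x : ℤ | ∃ i : ℕ, (d - 1 + 1) / 2 ≤ i ∧ i ≤ d - 2 ∧ x = coefC d (d-3) (i : ℤ)} with hS
  set iN : ℕ := (d+1)/2 with hiN
  set x : ℤ := coefC d (d-3) (iN : ℤ) with hx
  have hmem : x ∈ S := ⟨iN, by omega, by omega, rfl⟩
  have hG : 48 * x = Gfun (d:ℤ) (iN:ℤ) := coefC_eq d (by omega) _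
  have hneg : x < 0 := by
    rcases Nat.even_or_odd d with ⟨m, hm⟩ | ⟨m, hm⟩
    · have h1 : iN = m := by omega
      have h2 : (d:ℤ) = 2*m := by push_cast [hm]; ring
      have h3 : (4:ℤ) ≤ m := by omega
      have : Gfun (2*(m:ℤ)) m = -8*((m:ℤ)-1)*m^2*(2*m-1) := by simp only [Gfun]; ring
      rw [h1, h2, this] at hG
      have p1 : (0:ℤ) < ((m:ℤ)-1) * (m:ℤ)^2 * (2*(m:ℤ)-1) :=
        mul_pos (mul_pos (by omega) (by positivity)) (by omega)
      linarith
    · have h1 : iN = m + 1 := by omega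
      have h2 : (d:ℤ) = 2*m+1 := by push_cast [hm]; ring
      have h3 : (3:ℤ) ≤ m := by omega
      have : Gfun (2*(m:ℤ)+1) (m+1) = -8*(m:ℤ)*(m-1)*(2*m-1)*(2*m+1) := by
        simp only [Gfun]; ring
      rw [h1, h2] at hG
      push_cast at hG
      rw [this] at hG
      have p1 : (0:ℤ) < (m:ℤ) * ((m:ℤ)-1) * (2*(m:ℤ)-1) * (2*(m:ℤ)+1) :=
        mul_pos (mul_pos (mul_pos (by omega) (by omega)) (by omega)) (by omega)
      linarith
  have hbdd : BddBelow S := by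
    have hsub : S ⊆ (fun i : ℕ => coefC d (d-3) (i:ℤ)) '' (Set.Icc 0 (d-2)) := by
      rintro y ⟨i, hi1, hi2, rfl⟩
      exact ⟨i, ⟨Nat.zero_le _, hi2⟩, rfl⟩
    exact (((Set.finite_Icc 0 (d-2)).image _).bddBelow).mono hsub
  have : Nrd d (d-3) ≤ x := csInf_le hbdd hmem
  linarith
end

section
/- Let d ≥ 7 be an odd integer. Then C^d_{d−3,1} + C^d_{d−3,(d−1)/2} = − (d−3)(d−2)(d−1)·d·(d² − 7d + 8) / 48, and this quantity is negative. -/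
/-- Auxiliary closed form: subleading coefficient. -/
def AA (d i : ℚ) : ℚ := d * i - d * (d - 1) / 2

/-- Auxiliary closed form: second subleading coefficient. -/
def BB (d i : ℚ) : ℚ :=
  -(1/12) * d - (1/2) * d * i - (1/2) * d * i^2 + (3/8) * d^2 + d^2 * i
    + (1/2) * d^2 * i^2 - (5/12) * d^3 - (1/2) * d^3 * i + (1/8) * d^4

/-- Auxiliary closed form: third subleading coefficient. -/
def EE (d i : ℚ) : ℚ :=
  (1/6) * d * i + (1/2) * d * i^2 + (1/3) * d * i^3 - (1/8) * d^2 - (5/6) * d^2 * i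
    - (5/4) * d^2 * i^2 - (1/2) * d^2 * i^3 + (17/48) * d^3 + (29/24) * d^3 * i
    + d^3 * i^2 + (1/6) * d^3 * i^3 - (17/48) * d^4 - (2/3) * d^4 * i
    - (1/4) * d^4 * i^2 + (7/48) * d^5 + (1/8) * d^5 * i - (1/48) * d^6

open Polynomial in
lemma coeff_aux (n : ℕ) (i : ℤ) :
    ((∏ j ∈ Finset.range (n + 3), (X + C (i - (j : ℤ)))).coeff (n + 3) : ℚ) = 1 ∧
    ((∏ j ∈ Finset.range (n + 3), (X + C (i - (j : ℤ)))).coeff (n + 2) : ℚ)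
      = AA ((n : ℚ) + 3) (i : ℚ) ∧
    ((∏ j ∈ Finset.range (n + 3), (X + C (i - (j : ℤ)))).coeff (n + 1) : ℚ)
      = BB ((n : ℚ) + 3) (i : ℚ) ∧
    ((∏ j ∈ Finset.range (n + 3), (X + C (i - (j : ℤ)))).coeff n : ℚ)
      = EE ((n : ℚ) + 3) (i : ℚ) := by
  induction n with
  | zero =>
      have hP : (∏ j ∈ Finset.range 3, (X + C (i - (j : ℤ))))
          = X ^ 3 + C (3 * i - 3) * X ^ 2 + C (3 * i ^ 2 - 6 * i + 2) * X
            + C (i * (i - 1) * (i - 2)) := by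
        simp only [Finset.prod_range_succ, Finset.prod_range_zero, one_mul,
          Nat.cast_ofNat, Nat.cast_one, Nat.cast_zero, sub_zero]
        simp only [C_mul, C_add, C_sub, C_pow, C_1, map_ofNat]
        ring
      rw [hP]
      refine ⟨?_, ?_, ?_, ?_⟩ <;>
        simp only [coeff_add, coeff_C_mul, coeff_X_pow, coeff_X, coeff_C] <;>
        norm_num [AA, BB, EE] <;> push_cast <;> ring
  | succ n ih =>
      obtain ⟨h0, h1, h2, h3⟩ := ih
      set P := ∏ j ∈ Finset.range (n + 3), (X + C (i - (j : ℤ))) with hPdef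
      have hdeg : P.natDegree = n + 3 := by
        rw [hPdef, natDegree_prod_of_monic _ _ (fun j _ => monic_X_add_C _)]
        simp only [natDegree_X_add_C, Finset.sum_const, Finset.card_range, smul_eq_mul, mul_one]
      have htop : P.coeff ((n + 3) + 1) = 0 := by
        apply coeff_eq_zero_of_natDegree_lt; omega
      have hstep : ∏ j ∈ Finset.range (n + 1 + 3), (X + C (i - (j : ℤ)))
          = P * (X + C (i - ((n : ℤ) + 3))) := by
        have : n + 1 + 3 = (n + 3) + 1 := by omega
        rw [this, Finset.prod_range_succ, hPdef]
        push_cast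
        ring_nf
      have hco : ∀ m : ℕ, (P * (X + C (i - ((n : ℤ) + 3)))).coeff (m + 1)
          = P.coeff m + (i - ((n : ℤ) + 3)) * P.coeff (m + 1) := by
        intro m
        rw [mul_add, coeff_add, coeff_mul_X, coeff_mul_C, mul_comm]
      refine ⟨?_, ?_, ?_, ?_⟩
      · rw [show n + 1 + 3 = (n + 3) + 1 from by omega, hstep, hco, htop]
        push_cast
        rw [h0]; ring
      · rw [show n + 1 + 2 = (n + 2) + 1 from by omega, hstep, hco]
        push_cast
        rw [h1, show (n : ℕ) + 2 + 1 = n + 3 from by omega, h0]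
        simp only [AA]; push_cast; ring
      · rw [show n + 1 + 1 = (n + 1) + 1 from by omega, hstep, hco]
        push_cast
        rw [h2, show (n : ℕ) + 1 + 1 = n + 2 from by omega, h1]
        simp only [AA, BB]; push_cast; ring
      · rw [show n + 1 = n + 1 from rfl, hstep, hco]
        push_cast
        rw [h3, h2]
        simp only [BB, EE]; push_cast; ring

lemma coefC_eval (d : ℕ) (hd : 3 ≤ d) (i : ℤ) :
    (coefC d (d - 3) i : ℚ) = EE (d : ℚ) (i : ℚ) := by
  obtain ⟨n, rfl⟩ : ∃ n, d = n + 3 := ⟨d - 3, by omega⟩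
  have h := (coeff_aux n i).2.2.2
  have : n + 3 - 3 = n := by omega
  rw [coefC, this]
  rw [h]
  push_cast
  ring_nf

theorem stmt_13 (d : ℕ) (hd : 7 ≤ d) (hodd : Odd d) :
    (coefC d (d - 3) ((1 : ℕ) : ℤ) : ℚ) + (coefC d (d - 3) (((d - 1) / 2 : ℕ) : ℤ) : ℚ) =
      -(((d : ℚ) - 3) * ((d : ℚ) - 2) * ((d : ℚ) - 1) * (d : ℚ) *
          ((d : ℚ) ^ 2 - 7 * (d : ℚ) + 8)) / 48 ∧
    (coefC d (d - 3) ((1 : ℕ) : ℤ) : ℚ) + (coefC d (d - 3) (((d - 1) / 2 : ℕ) : ℤ) : ℚ) < 0 := by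
  obtain ⟨m, hm⟩ := hodd
  have hm3 : 3 ≤ m := by omega
  have hhalf : (d - 1) / 2 = m := by omega
  have hd3 : 3 ≤ d := by omega
  have hsum : (coefC d (d - 3) ((1 : ℕ) : ℤ) : ℚ)
      + (coefC d (d - 3) (((d - 1) / 2 : ℕ) : ℤ) : ℚ) =
      -(((d : ℚ) - 3) * ((d : ℚ) - 2) * ((d : ℚ) - 1) * (d : ℚ) *
          ((d : ℚ) ^ 2 - 7 * (d : ℚ) + 8)) / 48 := by
    rw [hhalf, coefC_eval d hd3, coefC_eval d hd3]
    have hdq : (d : ℚ) = 2 * (m : ℚ) + 1 := by push_cast [hm]; ring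
    rw [hdq]
    simp only [EE]
    push_cast
    ring
  refine ⟨hsum, ?_⟩
  rw [hsum]
  have hdq : (7 : ℚ) ≤ (d : ℚ) := by exact_mod_cast hd
  have h1 : 0 < (d : ℚ) - 3 := by linarith
  have h2 : 0 < (d : ℚ) - 2 := by linarith
  have h3 : 0 < (d : ℚ) - 1 := by linarith
  have h4 : 0 < (d : ℚ) := by linarith
  have h5 : 0 < (d : ℚ) ^ 2 - 7 * (d : ℚ) + 8 := by nlinarith
  have : 0 < ((d : ℚ) - 3) * ((d : ℚ) - 2) * ((d : ℚ) - 1) * (d : ℚ) *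
      ((d : ℚ) ^ 2 - 7 * (d : ℚ) + 8) := by positivity
  linarith
end

section
/- Let d ≥ 7 be an integer. Then M_{d−3,d} < N_{d−3,d}, i.e., min{ C^d_{d−3,i} : 1 ≤ i ≤ d−2 } < min{ C^d_{d−3,i} : ⌈(d−1)/2⌉ ≤ i ≤ d−2 }. -/
open Polynomial

lemma coefC_succ (d r : ℕ) (i : ℤ) :
    coefC (d+1) (r+1) i = (i - d) * coefC d (r+1) i + coefC d r i := by
  unfold coefC
  rw [Finset.prod_range_succ, mul_add, coeff_add, coeff_mul_X, coeff_mul_C]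
  ring

lemma coefC_top (d : ℕ) (i : ℤ) : coefC d d i = 1 := by
  have h : (∏ j ∈ Finset.range d, (X + C (i - (j : ℤ)))).Monic :=
    monic_prod_of_monic _ _ fun j _ => monic_X_add_C _
  have hdeg : (∏ j ∈ Finset.range d, (X + C (i - (j : ℤ)))).natDegree = d := by
    rw [natDegree_prod _ _ (fun j _ => (monic_X_add_C _).ne_zero)]
    simp only [natDegree_X_add_C, Finset.sum_const, smul_eq_mul, mul_one, Finset.card_range]
  have := h.coeff_natDegree
  rw [hdeg] at this
  exact this

lemma coefC_e1 (d : ℕ) (i : ℤ) :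
    2 * coefC (d+1) d i = (d+1) * (2*i - d) := by
  induction d with
  | zero => simp [coefC, Finset.prod_range_one]
  | succ d ih =>
    have h := coefC_succ (d+1) d i
    rw [show d+1+1 = d+2 from rfl] at h
    rw [h, coefC_top]
    push_cast
    push_cast at ih
    linarith [ih]

lemma coefC_e2 (d : ℕ) (i : ℤ) :
    24 * coefC (d+2) d i = (d+2) * (d+1) * (3*(2*i - d - 1)^2 - (d+3)) := by
  induction d with
  | zero =>
    have h0 : coefC 2 0 i = i * (i - 1) := by
      unfold coefC
      rw [coeff_zero_eq_eval_zero]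
      simp [Finset.prod_range_succ]
    rw [h0]; push_cast; ring
  | succ d ih =>
    have h3 : coefC (d+1+2) (d+1) i = (i - (d+2)) * coefC (d+2) (d+1) i + coefC (d+2) d i := by
      have := coefC_succ (d+2) d i
      convert this using 3 <;> push_cast <;> ring
    rw [h3]
    have h1 := coefC_e1 (d+1) i
    push_cast at ih h1 ⊢
    nlinarith [ih, h1]

lemma coefC_e3 (d : ℕ) (i : ℤ) :
    48 * coefC (d+3) d i
      = (d+3) * (d+2) * (d+1) * (2*i - d - 2) * ((2*i - d - 2)^2 - (d+4)) := by
  induction d with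
  | zero =>
    have h0 : coefC 3 0 i = i * (i - 1) * (i - 2) := by
      unfold coefC
      rw [coeff_zero_eq_eval_zero]
      simp [Finset.prod_range_succ]
    rw [h0]; push_cast; ring
  | succ d ih =>
    have h3 : coefC (d+1+3) (d+1) i = (i - (d+3)) * coefC (d+3) (d+1) i + coefC (d+3) d i := by
      have := coefC_succ (d+3) d i
      convert this using 3 <;> push_cast <;> ring
    rw [h3]
    have h2 := coefC_e2 (d+1) i
    push_cast at ih h2 ⊢
    nlinarith [ih, h2]

lemma key_lt (d : ℕ) (hd : 7 ≤ d) (i : ℕ) (h1 : (d - 1 + 1) / 2 ≤ i) (h2 : i ≤ d - 2) :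
    coefC d (d-3) 1 < coefC d (d-3) (i : ℤ) := by
  obtain ⟨e, rfl⟩ : ∃ e, d = e + 3 := ⟨d - 3, by omega⟩
  have he : (4:ℤ) ≤ e := by exact_mod_cast (by omega : 4 ≤ e)
  have hA := coefC_e3 e 1
  have hB := coefC_e3 e (i : ℤ)
  rw [show e + 3 - 3 = e from by omega]
  have hu0 : (0:ℤ) ≤ 2*(i:ℤ) - e - 2 := by
    have : e + 2 ≤ 2 * i := by omega
    have := (Int.ofNat_le.mpr this); push_cast at this ⊢; omega
  have hue : 2*(i:ℤ) - e - 2 ≤ e := by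
    have : 2 * i ≤ 2 * e + 2 := by omega
    have := (Int.ofNat_le.mpr this); push_cast at this ⊢; omega
  set u : ℤ := 2*(i:ℤ) - e - 2 with hudef
  have hcoef : (2*(1:ℤ) - e - 2) = -e := by ring
  rw [hcoef] at hA
  have hK : (0:ℤ) < ((e:ℤ)+3)*((e:ℤ)+2)*((e:ℤ)+1) := by positivity
  have hg : (-e) * ((-e)^2 - ((e:ℤ)+4)) < u * (u^2 - ((e:ℤ)+4)) := by
    rcases le_or_gt ((e:ℤ)+4) (u^2) with h | h
    · nlinarith
    · have h' : u^2 ≤ (e:ℤ) + 3 := by omega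
      nlinarith [sq_nonneg u, sq_nonneg (u*((e:ℤ)+4-u^2)), mul_nonneg hu0 (sq_nonneg u),
        sq_nonneg ((e:ℤ)-4), mul_nonneg (mul_nonneg hu0 hu0) hu0]
  have h48 : 48 * coefC (e+3) e 1 < 48 * coefC (e+3) e (i:ℤ) := by
    rw [hA, hB]
    calc ((e:ℤ)+3)*((e:ℤ)+2)*((e:ℤ)+1) * (-e) * ((-e)^2 - ((e:ℤ)+4))
        < ((e:ℤ)+3)*((e:ℤ)+2)*((e:ℤ)+1) * (u * (u^2 - ((e:ℤ)+4))) := by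
          rw [mul_assoc]
          exact mul_lt_mul_of_pos_left hg hK
      _ = ((e:ℤ)+3)*((e:ℤ)+2)*((e:ℤ)+1) * u * (u^2 - ((e:ℤ)+4)) := by ring
  linarith

theorem stmt_16 (d : ℕ) (hd : 7 ≤ d) : Mrd d (d - 3) < Nrd d (d - 3) := by
  set SM := {x : ℤ | ∃ i : ℕ, 1 ≤ i ∧ i ≤ d - 2 ∧ x = coefC d (d-3) (i : ℤ)} with hSM
  set SN := {x : ℤ | ∃ i : ℕ, (d - 1 + 1) / 2 ≤ i ∧ i ≤ d - 2 ∧ x = coefC d (d-3) (i : ℤ)}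
    with hSN
  have hMfin : SM.Finite := by
    apply Set.Finite.subset (Set.finite_range (fun i : Fin d => coefC d (d-3) (i : ℤ)))
    rintro x ⟨i, hi1, hi2, rfl⟩
    exact ⟨⟨i, by omega⟩, rfl⟩
  have hNfin : SN.Finite := by
    apply Set.Finite.subset (Set.finite_range (fun i : Fin d => coefC d (d-3) (i : ℤ)))
    rintro x ⟨i, hi1, hi2, rfl⟩
    exact ⟨⟨i, by omega⟩, rfl⟩
  have hNne : SN.Nonempty := ⟨coefC d (d-3) ((d-2 : ℕ) : ℤ), d-2, by omega, le_refl _, rfl⟩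
  have hNmem : Nrd d (d-3) ∈ SN := hNne.csInf_mem hNfin
  obtain ⟨i0, hi1, hi2, hNeq⟩ := hNmem
  have hM1 : coefC d (d-3) 1 ∈ SM := ⟨1, le_refl _, by omega, by norm_num⟩
  have hMle : Mrd d (d-3) ≤ coefC d (d-3) 1 := csInf_le hMfin.bddBelow hM1
  have hlt := key_lt d hd i0 hi1 hi2
  rw [← hNeq] at hlt
  exact lt_of_le_of_lt hMle hlt
end

section
/- Let d ≥ 3 and let r be an integer with 1 ≤ r ≤ d−2 such that d − r is even. Then N_{r,d} = M_{r,d}, i.e., min{ C^d_{r,i} : ⌈(d−1)/2⌉ ≤ i ≤ d−2 } = min{ C^d_{r,i} : 1 ≤ i ≤ d−2 }. -/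
open Polynomial in
lemma coefC_reflect (d r : ℕ) (hr : r ≤ d) (i : ℤ) :
    coefC d r ((d : ℤ) - 1 - i) = (-1 : ℤ) ^ (d - r) * coefC d r i := by
  unfold coefC
  have h1 : (∏ j ∈ Finset.range d, (X + C (((d : ℤ) - 1 - i) - (j : ℤ)))) =
      ∏ j ∈ Finset.range d, (X + C ((j : ℤ) - i)) := by
    rw [← Finset.prod_range_reflect]
    refine Finset.prod_congr rfl fun j hj => ?_
    have hjd : j < d := Finset.mem_range.mp hj
    congr 1
    have hc : ((d - 1 - j : ℕ) : ℤ) = (d : ℤ) - 1 - j := by omega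
    rw [hc]; ring
  rw [h1, Finset.prod_X_add_C_coeff _ _ (by simpa using hr),
    Finset.prod_X_add_C_coeff _ _ (by simpa using hr), Finset.mul_sum]
  refine Finset.sum_congr (by simp) fun t ht => ?_
  have hcard : t.card = d - r := by
    have := (Finset.mem_powersetCard.mp ht).2
    simpa using this
  calc ∏ j ∈ t, ((j : ℤ) - i) = ∏ j ∈ t, (-1) * (i - (j : ℤ)) :=
        Finset.prod_congr rfl fun j _ => by ring
    _ = (-1) ^ (d - r) * ∏ j ∈ t, (i - (j : ℤ)) := by
        rw [Finset.prod_mul_distrib, Finset.prod_const, hcard]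

theorem stmt_17 (d r : ℕ) (hd : 3 ≤ d) (hr1 : 1 ≤ r) (hr2 : r ≤ d - 2)
    (heven : Even (d - r)) : Nrd d r = Mrd d r := by
  have hrd : r ≤ d := by omega
  unfold Nrd Mrd
  congr 1
  ext x
  simp only [Set.mem_setOf_eq]
  constructor
  · rintro ⟨i, h1, h2, rfl⟩
    exact ⟨i, by omega, h2, rfl⟩
  · rintro ⟨i, h1, h2, rfl⟩
    by_cases hi : (d - 1 + 1) / 2 ≤ i
    · exact ⟨i, hi, h2, rfl⟩
    · refine ⟨d - 1 - i, by omega, by omega, ?_⟩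
      have hc : ((d - 1 - i : ℕ) : ℤ) = (d : ℤ) - 1 - i := by omega
      rw [hc, coefC_reflect d r hrd, heven.neg_one_pow, one_mul]
end

section
/- Let d ≥ 7 be an integer, and let δ_0, δ_1, …, δ_d be integers with δ_0 = 1, δ_i ≥ 0 for all i, and satisfying the Hibi inequalities: δ_d + δ_{d−1} + ··· + δ_{d−i} ≤ δ_1 + δ_2 + ··· + δ_{i+1} for every integer i with 0 ≤ i ≤ ⌊(d−1)/2⌋. Then Σ_{i=0}^{d} δ_i · C^d_{d−3,d−i} ≥ −stirl(d+1, d−2) + ( (Σ_{i=0}^{d} δ_i) − 1 ) · N_{d−3,d}. -/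
section AuxProof
open Polynomial Finset

noncomputable def PP (d : ℕ) (i : ℤ) : Polynomial ℤ :=
  ∏ j ∈ Finset.range d, (Polynomial.X + Polynomial.C (i - (j : ℤ)))

lemma PP_monic (d : ℕ) (i : ℤ) : (PP d i).Monic :=
  monic_prod_of_monic _ _ fun j _ => monic_X_add_C _

lemma PP_natDegree (d : ℕ) (i : ℤ) : (PP d i).natDegree = d := by
  rw [PP, natDegree_prod_of_monic _ _ fun j _ => monic_X_add_C _]
  simp only [natDegree_X_add_C, Finset.sum_const, Finset.card_range, smul_eq_mul, mul_one]

lemma PP_coeff_top (d : ℕ) (i : ℤ) : (PP d i).coeff d = 1 := by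
  have h := (PP_monic d i).coeff_natDegree
  rwa [PP_natDegree] at h

lemma PP_succ (d : ℕ) (i : ℤ) : PP (d+1) i = PP d i * (X + C (i - (d:ℤ))) := by
  rw [PP, PP, prod_range_succ]

lemma coeff_mul_linear (p : Polynomial ℤ) (a : ℤ) (n : ℕ) :
    (p * (X + C a)).coeff (n+1) = p.coeff n + a * p.coeff (n+1) := by
  rw [mul_add, coeff_add, coeff_mul_X, coeff_mul_C]; ring

noncomputable def e1 (D I : ℚ) : ℚ := D*I - D*(D-1)/2
noncomputable def q2 (D I : ℚ) : ℚ := D*I^2 - D*(D-1)*I + D*(D-1)*(2*D-1)/6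
noncomputable def q3 (D I : ℚ) : ℚ :=
  D*I^3 - 3*D*(D-1)/2*I^2 + D*(D-1)*(2*D-1)/2*I - D^2*(D-1)^2/4
noncomputable def e2 (D I : ℚ) : ℚ := ((e1 D I)^2 - q2 D I)/2
noncomputable def e3 (D I : ℚ) : ℚ :=
  ((e1 D I)^3 - 3*(e1 D I)*(q2 D I) + 2*(q3 D I))/6

lemma key_s18 (d : ℕ) (i : ℤ) :
    (((PP (d+3) i).coeff (d+2) : ℤ) : ℚ) = e1 ((d:ℚ)+3) (i:ℚ) ∧
    (((PP (d+3) i).coeff (d+1) : ℤ) : ℚ) = e2 ((d:ℚ)+3) (i:ℚ) ∧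
    (((PP (d+3) i).coeff d : ℤ) : ℚ) = e3 ((d:ℚ)+3) (i:ℚ) := by
  induction d with
  | zero =>
    have h3 : PP 3 i = ((X + C (i - 0)) * (X + C (i - 1))) * (X + C (i - 2)) := by
      rw [PP]
      rw [prod_range_succ, prod_range_succ, prod_range_succ, prod_range_zero, one_mul]
      norm_num
    have l0 : ∀ a : ℤ, (X + C a).coeff 0 = a := fun a => by simp
    have l1 : ∀ a : ℤ, (X + C a).coeff 1 = 1 := fun a => by
      rw [coeff_add, coeff_X_one, coeff_C]; norm_num
    have l2 : ∀ a : ℤ, (X + C a).coeff 2 = 0 := fun a => by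
      rw [coeff_add, coeff_C]; norm_num [coeff_X]
    refine ⟨?_, ?_, ?_⟩
    · rw [h3, show (0:ℕ)+2 = 1+1 from rfl, coeff_mul_linear, coeff_mul_linear,
        coeff_mul_linear]
      simp only [l0, l1, l2, show (1:ℕ)+1 = 2 from rfl]
      simp only [e1]
      push_cast
      ring
    · rw [h3, show (0:ℕ)+1 = 0+1 from rfl, coeff_mul_linear, coeff_mul_linear,
        mul_coeff_zero]
      simp only [l0, l1, show (0:ℕ)+1 = 1 from rfl]
      simp only [e1, e2, q2]
      push_cast
      ring
    · rw [h3, mul_coeff_zero, mul_coeff_zero, l0, l0, l0]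
      simp only [e1, e2, e3, q2, q3]
      push_cast
      ring
  | succ n ih =>
    obtain ⟨h1, h2, h3⟩ := ih
    have hs : PP (n+1+3) i = PP (n+3) i * (X + C (i - ((n:ℤ)+3))) := by
      have := PP_succ (n+3) i
      rw [show n+1+3 = (n+3)+1 from rfl, this]
      push_cast; ring_nf
    have htop : ((PP (n+3) i).coeff (n+3)) = 1 := PP_coeff_top (n+3) i
    refine ⟨?_, ?_, ?_⟩
    · rw [hs, show n+1+2 = (n+2)+1 from rfl, coeff_mul_linear]
      push_cast [h1, show n+2+1 = n+3 from rfl, htop]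
      simp only [e1]; push_cast; ring
    · rw [hs, show n+1+1 = (n+1)+1 from rfl, coeff_mul_linear]
      push_cast [h1, h2]
      simp only [e1, e2, q2]; push_cast; ring
    · rw [hs, show n+1 = n+1 from rfl, coeff_mul_linear]
      push_cast [h2, h3]
      simp only [e1, e2, e3, q2, q3]; push_cast; ring

lemma coefC_cast_s18 (d : ℕ) (hd : 3 ≤ d) (i : ℤ) :
    ((coefC d (d-3) i : ℤ) : ℚ) = e3 (d:ℚ) (i:ℚ) := by
  obtain ⟨e, rfl⟩ : ∃ e, d = e + 3 := ⟨d - 3, by omega⟩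
  have h := (key_s18 e i).2.2
  have : coefC (e+3) (e+3-3) i = (PP (e+3) i).coeff e := by
    rw [coefC, show e+3-3 = e from rfl]; rfl
  rw [this, h]; push_cast; ring_nf

lemma stirl_eq_coefC (n k : ℕ) : stirl n k = coefC n k 0 := by
  rw [stirl, coefC]
  congr 1
  apply Finset.prod_congr rfl
  intro j _
  rw [zero_sub, map_neg, sub_eq_add_neg]

lemma stirl_eq (d : ℕ) (hd : 7 ≤ d) :
    ((stirl (d+1) (d-2) : ℤ) : ℚ) = - e3 (d:ℚ) (d:ℚ) := by
  rw [stirl_eq_coefC]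
  have h : d - 2 = (d+1) - 3 := by omega
  rw [h, coefC_cast_s18 (d+1) (by omega) 0]
  simp only [e1, e2, e3, q2, q3]
  push_cast
  ring

lemma coefC_antisym (d : ℕ) (hd : 3 ≤ d) (x : ℤ) :
    coefC d (d-3) ((d:ℤ) - 1 - x) = - coefC d (d-3) x := by
  have h1 := coefC_cast_s18 d hd ((d:ℤ) - 1 - x)
  have h2 := coefC_cast_s18 d hd x
  have : ((coefC d (d-3) ((d:ℤ) - 1 - x) : ℤ) : ℚ) = ((- coefC d (d-3) x : ℤ) : ℚ) := by
    rw [h1]; push_cast [h2]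
    simp only [e1, e2, e3, q2, q3] at *
    rw [h2] at *
    push_cast
    ring
  exact_mod_cast this

lemma stirl_coefC (d : ℕ) (hd : 7 ≤ d) :
    - stirl (d+1) (d-2) = coefC d (d-3) (d:ℤ) := by
  have h1 := stirl_eq d hd
  have h2 := coefC_cast_s18 d (by omega) (d:ℤ)
  have : ((- stirl (d+1) (d-2) : ℤ) : ℚ) = ((coefC d (d-3) (d:ℤ) : ℤ) : ℚ) := by
    push_cast [h1, h2]
    simp only [e1, e2, e3, q2, q3]
    push_cast
    ring
  exact_mod_cast this

-- A_{m0} ≤ 0 , even case: 2k = d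
lemma coefC_half_even (d k : ℕ) (hd : 7 ≤ d) (hk : 2*k = d) :
    coefC d (d-3) (k:ℤ) ≤ 0 := by
  have h := coefC_cast_s18 d (by omega) (k:ℤ)
  have hD : (7:ℚ) ≤ (d:ℚ) := by exact_mod_cast hd
  have hk' : (((k:ℕ):ℤ):ℚ) = (d:ℚ)/2 := by
    push_cast
    have : 2*(k:ℚ) = (d:ℚ) := by exact_mod_cast hk
    linarith
  have : ((coefC d (d-3) (k:ℤ) : ℤ) : ℚ) ≤ 0 := by
    rw [h, hk']
    set D := (d:ℚ)
    have key_s18 : 48 * e3 D (D/2) = -(D^2*(D-1)*(D-2)) := by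
      simp only [e1, e2, e3, q2, q3]; ring
    have h1 : (0:ℚ) ≤ D^2*(D-1)*(D-2) := by
      have h3 : (0:ℚ) ≤ D-1 := by linarith
      have h4 : (0:ℚ) ≤ D-2 := by linarith
      positivity
    linarith
  exact_mod_cast this

-- odd case: 2k = d+1
lemma coefC_half_odd (d k : ℕ) (hd : 7 ≤ d) (hk : 2*k = d+1) :
    coefC d (d-3) (k:ℤ) ≤ 0 := by
  have h := coefC_cast_s18 d (by omega) (k:ℤ)
  have hD : (7:ℚ) ≤ (d:ℚ) := by exact_mod_cast hd
  have hk' : (((k:ℕ):ℤ):ℚ) = ((d:ℚ)+1)/2 := by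
    push_cast
    have : 2*(k:ℚ) = (d:ℚ)+1 := by exact_mod_cast hk
    linarith
  have : ((coefC d (d-3) (k:ℤ) : ℤ) : ℚ) ≤ 0 := by
    rw [h, hk']
    set D := (d:ℚ)
    have key_s18 : 24 * e3 D ((D+1)/2) = -(D*(D-1)*(D-2)*(D-3)) := by
      simp only [e1, e2, e3, q2, q3]; ring
    have h1 : (0:ℚ) ≤ D*(D-1)*(D-2)*(D-3) := by
      have h2 : (0:ℚ) ≤ D := by linarith
      have h3 : (0:ℚ) ≤ D-1 := by linarith
      have h4 : (0:ℚ) ≤ D-2 := by linarith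
      have h5 : (0:ℚ) ≤ D-3 := by linarith
      positivity
    linarith
  exact_mod_cast this

lemma e3_convex (D K : ℚ) (hu0 : 0 ≤ 2*K - D) (hv0 : 0 ≤ D - 3 - K) :
    e3 D (K+1) - e3 D K ≤ e3 D (K+2) - e3 D (K+1) := by
  set u := 2*K - D with hud
  set v := D - 3 - K with hvd
  have key_s18 : 6 * ((e3 D (K+2) - e3 D (K+1)) - (e3 D (K+1) - e3 D K)) =
      1080 + 1026*u + 357*u^2 + 54*u^3 + 3*u^4
      + v*(1332 + 984*u + 234*u^2 + 18*u^3)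
      + v^2*(540 + 288*u + 36*u^2)
      + v^3*(72 + 24*u) := by
    simp only [e3, e2, e1, q2, q3, hud, hvd]; ring
  have m1 : 0 ≤ u^2 := sq_nonneg u
  have m2 : 0 ≤ u^3 := by positivity
  have m3 : 0 ≤ u^4 := by positivity
  have m4 : 0 ≤ v*(1332 + 984*u + 234*u^2 + 18*u^3) := by positivity
  have m5 : 0 ≤ v^2*(540 + 288*u + 36*u^2) := by positivity
  have m6 : 0 ≤ v^3*(72 + 24*u) := by positivity
  linarith

lemma coefC_convex (d k : ℕ) (hd : 7 ≤ d) (hk : d ≤ 2*k) (hk3 : k+3 ≤ d) :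
    coefC d (d-3) ((k:ℤ)+1) - coefC d (d-3) (k:ℤ) ≤
    coefC d (d-3) ((k:ℤ)+2) - coefC d (d-3) ((k:ℤ)+1) := by
  have h0 := coefC_cast_s18 d (by omega) (k:ℤ)
  have h1 := coefC_cast_s18 d (by omega) ((k:ℤ)+1)
  have h2 := coefC_cast_s18 d (by omega) ((k:ℤ)+2)
  have hu : (0:ℚ) ≤ 2*(k:ℚ) - (d:ℚ) := by
    have : (d:ℚ) ≤ 2*(k:ℚ) := by exact_mod_cast hk
    linarith
  have hv : (0:ℚ) ≤ (d:ℚ) - 3 - (k:ℚ) := by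
    have : (k:ℚ)+3 ≤ (d:ℚ) := by exact_mod_cast hk3
    linarith
  have hc := e3_convex (d:ℚ) (k:ℚ) hu hv
  have key_s18 : ((coefC d (d-3) ((k:ℤ)+1) - coefC d (d-3) (k:ℤ) : ℤ) : ℚ) ≤
      ((coefC d (d-3) ((k:ℤ)+2) - coefC d (d-3) ((k:ℤ)+1) : ℤ) : ℚ) := by
    push_cast [h0, h1, h2]
    convert hc using 2 <;> push_cast <;> ring_nf
  exact_mod_cast key_s18

-- top increment
lemma coefC_top_incr (d : ℕ) (hd : 7 ≤ d) :
    coefC d (d-3) ((d:ℤ)-2) ≤ coefC d (d-3) ((d:ℤ)-1) := by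
  have h0 := coefC_cast_s18 d (by omega) ((d:ℤ)-2)
  have h1 := coefC_cast_s18 d (by omega) ((d:ℤ)-1)
  have hD : (7:ℚ) ≤ (d:ℚ) := by exact_mod_cast hd
  have key_s18 : ((coefC d (d-3) ((d:ℤ)-2) : ℤ) : ℚ) ≤ ((coefC d (d-3) ((d:ℤ)-1) : ℤ) : ℚ) := by
    rw [h0, h1]
    push_cast
    set D := (d:ℚ)
    have key2 : 24 * (e3 D (D-1) - e3 D (D-2)) = D*(D-1)*(D-2)*(3*D-4)*(D-3) := by
      simp only [e3, e2, e1, q2, q3]; ring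
    have h2 : (0:ℚ) ≤ D*(D-1)*(D-2)*(3*D-4)*(D-3) := by
      have hD0 : (0:ℚ) ≤ D := by linarith
      have h3 : (0:ℚ) ≤ D-1 := by linarith
      have h4 : (0:ℚ) ≤ D-2 := by linarith
      have h5 : (0:ℚ) ≤ 3*D-4 := by linarith
      have h6 : (0:ℚ) ≤ D-3 := by linarith
      positivity
    linarith
  exact_mod_cast key_s18

section Abel
open Finset

variable (d : ℕ) (A B : ℕ → ℤ)

-- monotone case
lemma abel_mono : ∀ (n c : ℕ), c + n = d →
    (∀ k, c ≤ k → k + 2 ≤ d → A k ≤ A (k+1)) →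
    (∀ k, c ≤ k → k ≤ d → 0 ≤ ∑ j ∈ Ico k d, B j) →
    (∑ j ∈ Ico c d, B j) * A c ≤ ∑ k ∈ Ico c d, B k * A k := by
  intro n
  induction n with
  | zero =>
    intro c hc _ _
    rw [show c = d by omega]
    simp
  | succ n ih =>
    intro c hc hmono hT
    have hcd : c < d := by omega
    rw [Finset.sum_eq_sum_Ico_succ_bot hcd, Finset.sum_eq_sum_Ico_succ_bot hcd (f := fun k => B k * A k)]
    have ih' := ih (c+1) (by omega)
      (fun k hk hk2 => hmono k (by omega) hk2)
      (fun k hk hk2 => hT k (by omega) hk2)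
    rcases Nat.eq_or_lt_of_le (show c + 1 ≤ d by omega) with heq | hlt
    · rw [← heq]
      simp
    · have hmono' := hmono c le_rfl (by omega)
      have hT' := hT (c+1) (by omega) (by omega)
      nlinarith [ih', hT', hmono']

-- convex case
lemma abel_convex : ∀ (n c : ℕ), c + n = d → c + 1 ≤ d → ∀ (S μ : ℤ),
    (∀ k, c ≤ k → k + 3 ≤ d → A (k+1) - A k ≤ A (k+2) - A (k+1)) →
    (∀ k, c ≤ k → k ≤ d → 0 ≤ ∑ j ∈ Ico k d, B j ∧ ∑ j ∈ Ico k d, B j ≤ S) →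
    (∀ j, c ≤ j → j + 1 ≤ d → μ ≤ A j) →
    μ ≤ 0 → 0 ≤ S →
    (∑ j ∈ Ico c d, B j) * A c + S * (μ - A c) ≤ ∑ k ∈ Ico c d, B k * A k := by
  intro n
  induction n with
  | zero => intro c hc hc1; omega
  | succ n ih =>
    intro c hc hc1 S μ hconv hT hμ hμ0 hS
    have hcd : c < d := by omega
    rw [Finset.sum_eq_sum_Ico_succ_bot hcd, Finset.sum_eq_sum_Ico_succ_bot hcd (f := fun k => B k * A k)]
    rcases Nat.eq_or_lt_of_le (show c + 1 ≤ d by omega) with heq | hlt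
    · -- base: c = d - 1
      rw [← heq]
      simp only [Finset.Ico_self, Finset.sum_empty, add_zero]
      have h1 := hμ c le_rfl (by omega)
      nlinarith [hS]
    · -- step
      have hTc1 := hT (c+1) (by omega) (by omega)
      rcases le_or_gt (A c) (A (c+1)) with hup | hdown
      · -- monotone from here on: use abel_mono
        have hmono : ∀ k, c+1 ≤ k → k + 2 ≤ d → A k ≤ A (k+1) := by
          intro k hk hk2
          -- induction: increments nondecreasing from c
          have step : ∀ m : ℕ, c + m + 2 ≤ d → A (c+m) ≤ A (c+m+1) := by
            intro m
            induction m with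
            | zero => intro _; simpa using hup
            | succ p ihp =>
              intro hp
              have h1 := ihp (by omega)
              have h2 := hconv (c+p) (by omega) (by omega)
              rw [show c+(p+1) = c+p+1 by omega, show c+p+1+1 = c+p+2 by omega]
              omega
          have hst := step (k - c) (by omega)
          rw [show c+(k-c) = k by omega] at hst
          exact hst
        have hmain := abel_mono d A B n (c+1) (by omega) hmono
          (fun k hk hk2 => (hT k (by omega) hk2).1)
        have hAc := hμ c le_rfl (by omega)
        have hTnn := (hT (c+1) (by omega) (by omega)).1
        nlinarith [hmain, hTnn, hup, hAc, hS]
      · -- decreasing step: use IH with same μ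
        have ih' := ih (c+1) (by omega) (by omega) S μ
          (fun k hk hk3 => hconv k (by omega) hk3)
          (fun k hk hk2 => hT k (by omega) hk2)
          (fun j hj hj1 => hμ j (by omega) hj1)
          hμ0 hS
        have hTS := hT (c+1) (by omega) (by omega)
        nlinarith [ih', hTS.1, hTS.2, hdown]

end Abel

section Main
open Finset

lemma antisym_nat (d : ℕ) (hd : 7 ≤ d) (k : ℕ) (hk : k ≤ d - 1) :
    coefC d (d-3) (k:ℤ) = - coefC d (d-3) (((d-1-k : ℕ)):ℤ) := by
  have h := coefC_antisym d (by omega) (((d-1-k : ℕ)):ℤ)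
  have hc : ((d:ℤ) - 1 - ((d-1-k : ℕ):ℤ)) = (k:ℤ) := by
    have : ((d-1-k : ℕ):ℤ) = (d:ℤ) - 1 - (k:ℤ) := by push_cast [Nat.cast_sub] <;> omega
    omega
  rw [hc] at h
  omega

lemma pairing (d m0 : ℕ) (hd : 7 ≤ d) (hm : m0 = (d+1)/2) (δ : ℕ → ℤ) :
    ∑ k ∈ range d, δ (d-k) * coefC d (d-3) (k:ℤ) =
    ∑ k ∈ Ico m0 d, (δ (d-k) - δ (k+1)) * coefC d (d-3) (k:ℤ) := by
  set A : ℕ → ℤ := fun k => coefC d (d-3) (k:ℤ) with hA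
  have hsplit : ∑ k ∈ range d, δ (d-k) * A k =
      (∑ k ∈ Ico 0 (d-m0), δ (d-k) * A k) + ∑ k ∈ Ico (d-m0) d, δ (d-k) * A k := by
    rw [Finset.range_eq_Ico, ← Finset.sum_Ico_consecutive _ (by omega : 0 ≤ d - m0) (by omega : d - m0 ≤ d)]
  have hlow : ∑ k ∈ Ico 0 (d-m0), δ (d-k) * A k = ∑ j ∈ Ico m0 d, δ (j+1) * (- A j) := by
    refine Finset.sum_nbij' (fun k => d-1-k) (fun j => d-1-j) ?_ ?_ ?_ ?_ ?_
    · intro a ha; simp only [Finset.mem_Ico] at *; omega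
    · intro a ha; simp only [Finset.mem_Ico] at *; omega
    · intro a ha; simp only [Finset.mem_Ico] at *; omega
    · intro a ha; simp only [Finset.mem_Ico] at *; omega
    · intro a ha
      simp only [Finset.mem_Ico] at ha
      have h2 : d - 1 - a + 1 = d - a := by omega
      rw [h2]
      have h3 : A a = - A (d-1-a) := by
        rw [hA]; exact antisym_nat d hd a (by omega)
      rw [h3]
  rcases Nat.even_or_odd d with ⟨e, he⟩ | ⟨e, he⟩
  · -- even : d - m0 = m0
    have hdm : d - m0 = m0 := by omega
    rw [hsplit, hlow, hdm, ← Finset.sum_add_distrib]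
    apply Finset.sum_congr rfl
    intro k _
    ring
  · -- odd : d - m0 = m0 - 1, middle term vanishes
    have hdm : d - m0 = m0 - 1 := by omega
    have hmid : A (m0 - 1) = 0 := by
      have h := antisym_nat d hd (m0-1) (by omega)
      have : d - 1 - (m0 - 1) = m0 - 1 := by omega
      rw [this] at h
      show coefC d (d-3) (((m0-1:ℕ)):ℤ) = 0
      omega
    have hup : ∑ k ∈ Ico (m0-1) d, δ (d-k) * A k = ∑ k ∈ Ico m0 d, δ (d-k) * A k := by
      rw [Finset.sum_eq_sum_Ico_succ_bot (by omega : m0 - 1 < d), hmid]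
      rw [show m0 - 1 + 1 = m0 by omega]
      simp
    rw [hsplit, hlow, hdm, hup, ← Finset.sum_add_distrib]
    apply Finset.sum_congr rfl
    intro k _
    ring

lemma Tbounds (d m0 : ℕ) (hd : 7 ≤ d) (hm : m0 = (d+1)/2) (δ : ℕ → ℤ)
    (hnn : ∀ i ≤ d, 0 ≤ δ i)
    (hibi : ∀ i ≤ (d - 1) / 2,
      ∑ j ∈ Finset.range (i + 1), δ (d - j) ≤ ∑ j ∈ Finset.Icc 1 (i + 1), δ j) :
    ∀ k, m0 ≤ k → k ≤ d → 0 ≤ (∑ j ∈ Ico k d, (δ (d-j) - δ (j+1))) ∧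
      (∑ j ∈ Ico k d, (δ (d-j) - δ (j+1))) ≤ ∑ i ∈ Icc 1 d, δ i := by
  intro k hk hkd
  have hSBnn : (0:ℤ) ≤ ∑ i ∈ Icc 1 d, δ i :=
    Finset.sum_nonneg fun i hi => hnn i (by simp only [Finset.mem_Icc] at hi; omega)
  rcases Nat.eq_or_lt_of_le hkd with rfl | hlt
  · simp [hSBnn]
  have h1 : ∑ j ∈ Ico k d, δ (d-j) = ∑ i ∈ Icc 1 (d-k), δ i := by
    apply Finset.sum_nbij' (fun j => d-j) (fun i => d-i)
    · intro a ha; simp only [Finset.mem_Ico, Finset.mem_Icc] at *; omega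
    · intro a ha; simp only [Finset.mem_Ico, Finset.mem_Icc] at *; omega
    · intro a ha; simp only [Finset.mem_Ico] at *; omega
    · intro a ha; simp only [Finset.mem_Icc] at *; omega
    · intro a _; rfl
  have h2 : ∑ j ∈ Ico k d, δ (j+1) = ∑ i ∈ Icc (k+1) d, δ i := by
    apply Finset.sum_nbij' (fun j => j+1) (fun i => i-1)
    · intro a ha; simp only [Finset.mem_Ico, Finset.mem_Icc] at *; omega
    · intro a ha; simp only [Finset.mem_Ico, Finset.mem_Icc] at *; omega
    · intro a ha; simp only [Finset.mem_Ico] at *; omega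
    · intro a ha; simp only [Finset.mem_Icc] at *; omega
    · intro a _; rfl
  have hibi' := hibi (d-1-k) (by omega)
  have h3 : ∑ j ∈ Finset.range (d-1-k+1), δ (d-j) = ∑ i ∈ Icc (k+1) d, δ i := by
    rw [Finset.range_eq_Ico]
    apply Finset.sum_nbij' (fun j => d-j) (fun i => d-i)
    · intro a ha; simp only [Finset.mem_Ico, Finset.mem_Icc] at *; omega
    · intro a ha; simp only [Finset.mem_Ico, Finset.mem_Icc] at *; omega
    · intro a ha; simp only [Finset.mem_Ico] at *; omega
    · intro a ha; simp only [Finset.mem_Icc] at *; omega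
    · intro a _; rfl
  have h4 : Finset.Icc 1 (d-1-k+1) = Finset.Icc 1 (d-k) := by
    congr 1; omega
  rw [h3, h4] at hibi'
  rw [Finset.sum_sub_distrib, h1, h2]
  constructor
  · omega
  · have h5 : ∑ i ∈ Icc 1 (d-k), δ i ≤ ∑ i ∈ Icc 1 d, δ i := by
      apply Finset.sum_le_sum_of_subset_of_nonneg
      · apply Finset.Icc_subset_Icc_right; omega
      · intro i hi _; exact hnn i (by simp only [Finset.mem_Icc] at hi; omega)
    have h6 : (0:ℤ) ≤ ∑ i ∈ Icc (k+1) d, δ i :=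
      Finset.sum_nonneg fun i hi => hnn i (by simp only [Finset.mem_Icc] at hi; omega)
    omega

end Main

end AuxProof

theorem stmt_18 (d : ℕ) (hd : 7 ≤ d) (δ : ℕ → ℤ) (h0 : δ 0 = 1)
    (hnn : ∀ i ≤ d, 0 ≤ δ i)
    (hibi : ∀ i ≤ (d - 1) / 2,
      ∑ j ∈ Finset.range (i + 1), δ (d - j) ≤ ∑ j ∈ Finset.Icc 1 (i + 1), δ j) :
    ∑ i ∈ Finset.range (d + 1), δ i * coefC d (d - 3) ((d : ℤ) - (i : ℤ)) ≥
      -stirl (d + 1) (d - 2) +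
        ((∑ i ∈ Finset.range (d + 1), δ i) - 1) * Nrd d (d - 3) := by
  classical
  set m0 : ℕ := (d+1)/2 with hm0
  set A : ℕ → ℤ := fun k => coefC d (d-3) (k:ℤ) with hA
  set N : ℤ := Nrd d (d-3) with hN
  set SB : ℤ := ∑ i ∈ Finset.Icc 1 d, δ i with hSB
  -- rewrite LHS via reflection
  have hL : ∑ i ∈ Finset.range (d+1), δ i * coefC d (d-3) ((d:ℤ) - (i:ℤ)) =
      ∑ k ∈ Finset.range (d+1), δ (d-k) * A k := by
    rw [← Finset.sum_range_reflect (fun k => δ (d-k) * A k) (d+1)]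
    apply Finset.sum_congr rfl
    intro i hi
    have hi' : i ≤ d := by
      simp only [Finset.mem_range] at hi; omega
    have e1 : d + 1 - 1 - i = d - i := by omega
    rw [e1]
    have e2 : d - (d - i) = i := by omega
    show δ i * coefC d (d-3) ((d:ℤ) - (i:ℤ)) = δ (d - (d-i)) * coefC d (d-3) (((d-i:ℕ)):ℤ)
    rw [e2]
    congr 1
    congr 1
    push_cast [Nat.cast_sub hi']
    ring
  -- total sum decomposition
  have htot : ∑ i ∈ Finset.range (d+1), δ i = 1 + SB := by
    rw [Finset.sum_range_succ' (fun i => δ i) d, h0, hSB]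
    have : ∑ i ∈ Finset.Icc 1 d, δ i = ∑ i ∈ Finset.range d, δ (i+1) := by
      rw [show Finset.Icc 1 d = Finset.Ico 1 (d+1) by rw [Finset.Ico_add_one_right_eq_Icc],
        Finset.sum_Ico_eq_sum_range]
      apply Finset.sum_congr (by congr 1) (fun i _ => by rw [add_comm])
    omega
  -- top term
  have htop : ∑ k ∈ Finset.range (d+1), δ (d-k) * A k =
      (∑ k ∈ Finset.range d, δ (d-k) * A k) + A d := by
    rw [Finset.sum_range_succ]
    simp [h0]
  have hstirl : A d = - stirl (d+1) (d-2) := by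
    show coefC d (d-3) ((d:ℕ):ℤ) = - stirl (d+1) (d-2)
    rw [← stirl_coefC d hd]
  -- the paired sum
  have hpair := pairing d m0 hd hm0 δ
  -- bounds on tails
  have hTb := Tbounds d m0 hd hm0 δ hnn hibi
  -- N is a lower bound of A on [m0, d-2]
  have hNle : ∀ j : ℕ, m0 ≤ j → j ≤ d-2 → N ≤ A j := by
    intro j hj1 hj2
    rw [hN, Nrd]
    have hbdd : BddBelow {x : ℤ | ∃ i : ℕ, (d - 1 + 1) / 2 ≤ i ∧ i ≤ d - 2 ∧ x = coefC d (d-3) (i:ℤ)} := by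
      have hset : {x : ℤ | ∃ i : ℕ, (d - 1 + 1) / 2 ≤ i ∧ i ≤ d - 2 ∧ x = coefC d (d-3) (i:ℤ)} =
          ↑((Finset.Icc ((d-1+1)/2) (d-2)).image (fun i : ℕ => coefC d (d-3) (i:ℤ))) := by
        ext x
        simp only [Set.mem_setOf_eq, Finset.coe_image, Set.mem_image, Finset.mem_coe,
          Finset.mem_Icc]
        constructor
        · rintro ⟨i, h1, h2, rfl⟩; exact ⟨i, ⟨h1, h2⟩, rfl⟩
        · rintro ⟨i, ⟨h1, h2⟩, rfl⟩; exact ⟨i, h1, h2, rfl⟩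
      rw [hset]
      exact (Finset.finite_toSet _).bddBelow
    apply csInf_le hbdd
    exact ⟨j, by omega, hj2, rfl⟩
  -- lower bound property for all j in [m0, d-1]
  have hμ : ∀ j : ℕ, m0 ≤ j → j + 1 ≤ d → N ≤ A j := by
    intro j hj1 hj2
    rcases Nat.lt_or_ge j (d-1) with h | h
    · exact hNle j hj1 (by omega)
    · have hj : j = d-1 := by omega
      have h1 : N ≤ A (d-2) := hNle (d-2) (by omega) le_rfl
      have h2 : A (d-2) ≤ A (d-1) := by
        have := coefC_top_incr d hd
        have e1 : ((d-2 : ℕ):ℤ) = (d:ℤ)-2 := by omega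
        have e2 : ((d-1 : ℕ):ℤ) = (d:ℤ)-1 := by omega
        show coefC d (d-3) (((d-2:ℕ)):ℤ) ≤ coefC d (d-3) (((d-1:ℕ)):ℤ)
        rw [e1, e2]
        exact this
      rw [hj]; omega
  -- A m0 ≤ 0
  have hAm0 : A m0 ≤ 0 := by
    rcases Nat.even_or_odd d with ⟨e, he⟩ | ⟨e, he⟩
    · exact coefC_half_even d m0 hd (by omega)
    · exact coefC_half_odd d m0 hd (by omega)
  have hNneg : N ≤ 0 := le_trans (hμ m0 le_rfl (by omega)) hAm0
  have hSBnn : (0:ℤ) ≤ SB :=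
    Finset.sum_nonneg fun i hi => hnn i (by simp only [Finset.mem_Icc] at hi; omega)
  -- convexity hypothesis
  have hconv : ∀ k, m0 ≤ k → k + 3 ≤ d → A (k+1) - A k ≤ A (k+2) - A (k+1) := by
    intro k hk1 hk2
    have := coefC_convex d k hd (by omega) (by omega)
    have e1 : ((k+1 : ℕ):ℤ) = (k:ℤ)+1 := by push_cast; ring
    have e2 : ((k+2 : ℕ):ℤ) = (k:ℤ)+2 := by push_cast; ring
    show coefC d (d-3) (((k+1:ℕ)):ℤ) - coefC d (d-3) ((k:ℕ):ℤ) ≤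
      coefC d (d-3) (((k+2:ℕ)):ℤ) - coefC d (d-3) (((k+1:ℕ)):ℤ)
    rw [e1, e2]
    omega
  -- apply the abel lemma
  have habel := abel_convex d A (fun j => δ (d-j) - δ (j+1)) (d - m0) m0 (by omega) (by omega)
    SB N hconv (fun k hk hkd => hTb k hk hkd) hμ hNneg hSBnn
  -- conclude
  have hT0 := hTb m0 le_rfl (by omega)
  have hfinal : SB * N ≤ ∑ k ∈ Finset.Ico m0 d, (δ (d-k) - δ (k+1)) * A k := by
    have h1 : (∑ j ∈ Finset.Ico m0 d, (δ (d-j) - δ (j+1))) * A m0 + SB * (N - A m0) ≥ SB * N := by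
      nlinarith [hT0.1, hT0.2, hAm0]
    linarith [habel]
  rw [ge_iff_le, hL, htop, hstirl, htot]
  have hpair' : ∑ k ∈ Finset.range d, δ (d-k) * A k =
      ∑ k ∈ Finset.Ico m0 d, (δ (d-k) - δ (k+1)) * A k := hpair
  rw [hpair']
  push_cast
  linarith [hfinal]
end

section
/- Let d ≥ 3 and let r be an integer with 1 ≤ r ≤ d−2 such that d − r is odd. Assume there exists an integer t with ⌈(d−1)/2⌉ + 1 ≤ t ≤ d−1 such that: C^d_{r,i} ≥ C^d_{r,i−1} for all integers i with t ≤ i ≤ d−1, and N_{r,d} = min{ C^d_{r,i} : ⌈(d−1)/2⌉ ≤ i ≤ t−1 } = min{ −|C^d_{r,i}| : ⌈(d−1)/2⌉ ≤ i ≤ t−1 }. Let δ_0, δ_1, …, δ_d be integers with δ_0 = 1, δ_i ≥ 0 for all i, and satisfying the Hibi inequalities: δ_d + δ_{d−1} + ··· + δ_{d−i} ≤ δ_1 + δ_2 + ··· + δ_{i+1} for every integer i with 0 ≤ i ≤ ⌊(d−1)/2⌋. Then Σ_{i=0}^{d} δ_i · C^d_{r,d−i} ≥ (−1)^{d−r}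 · stirl(d+1, r+1) + ( (Σ_{i=0}^{d} δ_i) − 1 ) · N_{r,d}. -/
open Polynomial Finset

lemma coeff_comp_neg_X (p : ℤ[X]) (r : ℕ) : (p.comp (-X)).coeff r = (-1)^r * p.coeff r := by
  induction p using Polynomial.induction_on' with
  | add p q hp hq => simp [add_comp, hp, hq, mul_add]
  | monomial n a =>
    rw [monomial_comp, show ((-X : ℤ[X])^n) = C ((-1)^n) * X^n by
      rw [neg_pow]; simp [C_pow]]
    rw [coeff_monomial, ← mul_assoc, mul_comm (C a), mul_assoc, coeff_C_mul, coeff_C_mul,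
      coeff_X_pow]
    split_ifs with h
    · subst h; ring
    · omega
    · omega
    · ring

lemma coefC_symm (d r : ℕ) (i : ℤ) :
    coefC d r i = (-1)^(d+r) * coefC d r ((d:ℤ) - 1 - i) := by
  have hcomp : (∏ j ∈ range d, (X + C ((d:ℤ) - 1 - i - j))).comp (-X) =
      (-1)^d * ∏ j ∈ range d, (X + C (i - (j:ℤ))) := by
    rw [Polynomial.prod_comp]
    have h1 : ∀ j ∈ range d, ((X + C ((d:ℤ) - 1 - i - j)).comp (-X)) =
        -(X + C (i - ((d:ℤ) - 1 - (j:ℤ)))) := by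
      intro j _
      rw [add_comp, X_comp, C_comp]
      rw [show ((d:ℤ) - 1 - i - j) = -(i - ((d:ℤ) - 1 - (j:ℤ))) by ring]
      rw [map_neg]
      ring
    rw [Finset.prod_congr rfl h1]
    have h2 : ∏ j ∈ range d, (X + C (i - ((d:ℤ) - 1 - (j:ℤ)))) =
        ∏ j ∈ range d, (X + C (i - (j:ℤ))) := by
      rw [← Finset.prod_range_reflect (fun j => X + C (i - (j:ℤ))) d]
      refine Finset.prod_congr rfl fun j hj => ?_
      simp only [Finset.mem_range] at hj
      congr 2
      have : ((d - 1 - j : ℕ) : ℤ) = (d:ℤ) - 1 - j := by omega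
      rw [this]
    rw [← h2]
    calc ∏ j ∈ range d, -(X + C (i - ((d:ℤ) - 1 - (j:ℤ))))
        = ∏ j ∈ range d, ((-1 : ℤ[X]) * (X + C (i - ((d:ℤ) - 1 - (j:ℤ))))) := by
          simp [neg_one_mul]
      _ = (∏ _j ∈ range d, (-1 : ℤ[X])) * ∏ j ∈ range d, (X + C (i - ((d:ℤ) - 1 - (j:ℤ)))) :=
          Finset.prod_mul_distrib
      _ = (-1)^d * ∏ j ∈ range d, (X + C (i - ((d:ℤ) - 1 - (j:ℤ)))) := by
          rw [Finset.prod_const, card_range]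
  have hmain : (∏ j ∈ range d, (X + C (i - (j:ℤ)))) =
      (-1)^d * (∏ j ∈ range d, (X + C ((d:ℤ) - 1 - i - j))).comp (-X) := by
    rw [hcomp, ← mul_assoc, ← pow_add]
    simp [pow_mul]
  unfold coefC
  rw [hmain]
  rw [show ((-1 : ℤ[X])^d) = C ((-1:ℤ)^d) by simp [C_pow]]
  rw [coeff_C_mul, coeff_comp_neg_X, ← mul_assoc, ← pow_add]

lemma stirl_eq_coefC_s19 (d r : ℕ) : stirl (d+1) (r+1) = coefC d r (-1) := by
  unfold stirl coefC
  rw [Finset.prod_range_succ' (fun j => X - C (j:ℤ)) d]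
  simp only [Nat.cast_zero, map_zero, sub_zero]
  rw [coeff_mul_X]
  refine congrArg (fun p => Polynomial.coeff p r) (Finset.prod_congr rfl fun j _ => ?_)
  rw [sub_eq_add_neg, ← C_neg]
  congr 1
  push_cast
  ring

lemma abel_aux (e b : ℕ → ℤ) (n : ℕ) (hb : ∀ j < n, b (j+1) ≤ b j)
    (he : ∀ j < n, 0 ≤ ∑ l ∈ Finset.range (j+1), e l) :
    (∑ l ∈ Finset.range (n+1), e l) * b n ≤ ∑ j ∈ Finset.range (n+1), e j * b j := by
  induction n with
  | zero => simp
  | succ n ih =>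
    have h1 := ih (fun j hj => hb j (by omega)) (fun j hj => he j (by omega))
    have h2 : (∑ l ∈ Finset.range (n+1), e l) * b (n+1) ≤
        (∑ l ∈ Finset.range (n+1), e l) * b n :=
      mul_le_mul_of_nonneg_left (hb n (by omega)) (he n (by omega))
    rw [Finset.sum_range_succ (fun j => e j * b j), Finset.sum_range_succ e, add_mul]
    linarith

lemma split_sum (d q : ℕ) (hq1 : 1 ≤ q) (hq2 : 2*q ≤ d) (F : ℕ → ℤ) :
    ∑ i ∈ Finset.Icc 1 d, F i =
      (∑ j ∈ Finset.range q, (F (j+1) + F (d-j))) + ∑ i ∈ Finset.Icc (q+1) (d-q), F i := by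
  rw [← Finset.Ico_add_one_right_eq_Icc 1 d, ← Finset.Ico_add_one_right_eq_Icc (q+1) (d-q)]
  rw [← Finset.sum_Ico_consecutive F (show 1 ≤ q+1 by omega) (show q+1 ≤ d+1 by omega)]
  rw [← Finset.sum_Ico_consecutive F (show q+1 ≤ d-q+1 by omega) (show d-q+1 ≤ d+1 by omega)]
  rw [Finset.sum_Ico_eq_sum_range (f := F) (m := 1) (n := q+1)]
  rw [Finset.sum_Ico_eq_sum_range (f := F) (m := d-q+1) (n := d+1)]
  rw [show q + 1 - 1 = q by omega, show d + 1 - (d - q + 1) = q by omega]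
  have e3 : ∑ j ∈ Finset.range q, F (d - q + 1 + j) = ∑ j ∈ Finset.range q, F (d - j) := by
    rw [← Finset.sum_range_reflect (fun j => F (d - q + 1 + j)) q]
    refine Finset.sum_congr rfl fun j hj => ?_
    simp only [Finset.mem_range] at hj
    congr 1
    omega
  have e4 : ∑ j ∈ Finset.range q, F (1 + j) = ∑ j ∈ Finset.range q, F (j + 1) := by
    refine Finset.sum_congr rfl fun j _ => ?_
    congr 1
    omega
  rw [e3, e4, Finset.sum_add_distrib]
  ring

theorem stmt_19 (d r : ℕ) (hd : 3 ≤ d) (hr1 : 1 ≤ r) (hr2 : r ≤ d - 2)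
    (hodd : Odd (d - r)) (t : ℕ)
    (ht1 : (d - 1 + 1) / 2 + 1 ≤ t) (ht2 : t ≤ d - 1)
    (hmono : ∀ i : ℕ, t ≤ i → i ≤ d - 1 → coefC d r ((i : ℤ) - 1) ≤ coefC d r (i : ℤ))
    (hN1 : Nrd d r =
      sInf {x : ℤ | ∃ i : ℕ, (d - 1 + 1) / 2 ≤ i ∧ i ≤ t - 1 ∧ x = coefC d r (i : ℤ)})
    (hN2 : Nrd d r =
      sInf {x : ℤ | ∃ i : ℕ, (d - 1 + 1) / 2 ≤ i ∧ i ≤ t - 1 ∧ x = -|coefC d r (i : ℤ)|})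
    (δ : ℕ → ℤ) (h0 : δ 0 = 1) (hnn : ∀ i ≤ d, 0 ≤ δ i)
    (hibi : ∀ i ≤ (d - 1) / 2,
      ∑ j ∈ Finset.range (i + 1), δ (d - j) ≤ ∑ j ∈ Finset.Icc 1 (i + 1), δ j) :
    ∑ i ∈ Finset.range (d + 1), δ i * coefC d r ((d : ℤ) - (i : ℤ)) ≥
      (-1) ^ (d - r) * stirl (d + 1) (r + 1) +
        ((∑ i ∈ Finset.range (d + 1), δ i) - 1) * Nrd d r := by
  have hd1 : d - 1 + 1 = d := by omega
  rw [hd1] at ht1 hN1 hN2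
  set q := d / 2 with hqdef
  set N := Nrd d r with hNdef
  set g : ℕ → ℤ := fun k => coefC d r (k:ℤ) with hgdef
  set J := d - 1 - t with hJdef
  have hq1 : 1 ≤ q := by omega
  have hq2 : 2*q ≤ d := by omega
  have hq3 : d ≤ 2*q + 1 := by omega
  have hqd2 : q ≤ d - 2 := by omega
  have htq : q + 1 ≤ t := ht1
  have hJq : J + 1 ≤ q := by omega
  -- N ≤ g k on [q, d-2]
  have hNle : ∀ k, q ≤ k → k ≤ d - 2 → N ≤ g k := by
    intro k h1 h2
    rw [hNdef]
    unfold Nrd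
    rw [hd1]
    have hsub : {x : ℤ | ∃ i : ℕ, q ≤ i ∧ i ≤ d-2 ∧ x = coefC d r (i:ℤ)} ⊆
        ↑((Finset.Icc q (d-2)).image (fun i : ℕ => coefC d r (i:ℤ))) := by
      rintro x ⟨i, hi1, hi2, rfl⟩
      simp only [Finset.coe_image, Set.mem_image, Finset.mem_coe, Finset.mem_Icc]
      exact ⟨i, ⟨hi1, hi2⟩, rfl⟩
    exact csInf_le (Set.Finite.bddBelow (Set.Finite.subset (Finset.finite_toSet _) hsub))
      ⟨k, h1, h2, rfl⟩
  -- N ≤ -|g k| on [q, t-1]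
  have hNabs : ∀ k, q ≤ k → k ≤ t - 1 → N ≤ -|g k| := by
    intro k h1 h2
    rw [hN2]
    have hsub : {x : ℤ | ∃ i : ℕ, q ≤ i ∧ i ≤ t-1 ∧ x = -|coefC d r (i:ℤ)|} ⊆
        ↑((Finset.Icc q (t-1)).image (fun i : ℕ => -|coefC d r (i:ℤ)|)) := by
      rintro x ⟨i, hi1, hi2, rfl⟩
      simp only [Finset.coe_image, Set.mem_image, Finset.mem_coe, Finset.mem_Icc]
      exact ⟨i, ⟨hi1, hi2⟩, rfl⟩
    exact csInf_le (Set.Finite.bddBelow (Set.Finite.subset (Finset.finite_toSet _) hsub))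
      ⟨k, h1, h2, rfl⟩
  have hN0 : N ≤ 0 := by
    have := hNabs q le_rfl (by omega)
    have h2 : -|g q| ≤ 0 := neg_nonpos.mpr (abs_nonneg _)
    linarith
  -- symmetry
  have hparity : (-1 : ℤ)^(d+r) = -1 := by
    refine Odd.neg_one_pow ?_
    obtain ⟨m, hm⟩ := hodd
    exact ⟨m + r, by omega⟩
  have hsym : ∀ k, k ≤ d - 1 → g k = - g (d-1-k) := by
    intro k hk
    have h := coefC_symm d r (k:ℤ)
    rw [hparity] at h
    show coefC d r (k:ℤ) = - coefC d r ((d-1-k : ℕ):ℤ)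
    rw [show ((d-1-k : ℕ):ℤ) = (d:ℤ) - 1 - (k:ℤ) by omega]
    rw [h]; ring
  have hmono' : ∀ k, t ≤ k → k ≤ d - 1 → g (k-1) ≤ g k := by
    intro k h1 h2
    have h := hmono k h1 h2
    show coefC d r ((k-1 : ℕ):ℤ) ≤ coefC d r (k:ℤ)
    rwa [show ((k-1 : ℕ):ℤ) = (k:ℤ) - 1 by omega]
  -- reduce the goal
  have hL : ∑ i ∈ Finset.range (d+1), δ i * coefC d r ((d:ℤ) - (i:ℤ)) =
      g d + ∑ i ∈ Finset.Icc 1 d, δ i * g (d-i) := by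
    have hc : ∀ i ∈ Finset.range (d+1), δ i * coefC d r ((d:ℤ) - (i:ℤ)) =
        δ i * g (d - i) := by
      intro i hi
      simp only [Finset.mem_range] at hi
      show _ = δ i * coefC d r ((d - i : ℕ):ℤ)
      rw [show ((d - i : ℕ):ℤ) = (d:ℤ) - (i:ℤ) by omega]
    rw [Finset.sum_congr rfl hc, Finset.range_eq_Ico,
      ← Finset.sum_Ico_consecutive _ (show 0 ≤ 1 by omega) (show 1 ≤ d+1 by omega),
      Finset.Ico_add_one_right_eq_Icc]
    congr 1
    simp [h0]
  have hδsum : ∑ i ∈ Finset.range (d+1), δ i = 1 + ∑ i ∈ Finset.Icc 1 d, δ i := by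
    rw [Finset.range_eq_Ico,
      ← Finset.sum_Ico_consecutive _ (show 0 ≤ 1 by omega) (show 1 ≤ d+1 by omega),
      Finset.Ico_add_one_right_eq_Icc]
    congr 1
    simp [h0]
  have hfirst : (-1:ℤ)^(d-r) * stirl (d+1) (r+1) = g d := by
    rw [stirl_eq_coefC_s19]
    have h := coefC_symm d r (-1)
    rw [hparity] at h
    have hcast : (d:ℤ) - 1 - (-1) = ((d:ℕ):ℤ) := by ring
    rw [hcast] at h
    have hdr : (-1:ℤ)^(d-r) = -1 := Odd.neg_one_pow hodd
    rw [hdr, h]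
    show (-1 : ℤ) * (-1 * g d) = g d
    ring
  rw [hL, hδsum, hfirst]
  have hgoal : ∑ i ∈ Finset.Icc 1 d, δ i * g (d-i) ≥ (∑ i ∈ Finset.Icc 1 d, δ i) * N := by
    rw [split_sum d q hq1 hq2 (fun i => δ i * g (d-i)),
      split_sum d q hq1 hq2 δ, add_mul]
    have hmiddle : (∑ i ∈ Finset.Icc (q+1) (d-q), δ i) * N ≤
        ∑ i ∈ Finset.Icc (q+1) (d-q), δ i * g (d-i) := by
      rw [Finset.sum_mul]
      refine Finset.sum_le_sum fun i hi => ?_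
      simp only [Finset.mem_Icc] at hi
      exact mul_le_mul_of_nonneg_left (hNle (d-i) (by omega) (by omega))
        (hnn i (by omega))
    -- pairs
    have hpairrw : ∀ j ∈ Finset.range q, δ (j+1) * g (d-(j+1)) + δ (d-j) * g (d-(d-j)) =
        (δ (j+1) - δ (d-j)) * g (d-1-j) := by
      intro j hj
      simp only [Finset.mem_range] at hj
      rw [show d - (j+1) = d-1-j by omega, show d - (d-j) = j by omega,
        hsym j (by omega)]
      ring
    have hpairs : (∑ j ∈ Finset.range q, (δ (j+1) + δ (d-j))) * N ≤
        ∑ j ∈ Finset.range q, (δ (j+1) * g (d-(j+1)) + δ (d-j) * g (d-(d-j))) := by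
      rw [Finset.sum_congr rfl hpairrw]
      rw [Finset.range_eq_Ico,
        ← Finset.sum_Ico_consecutive (fun j => (δ (j+1) - δ (d-j)) * g (d-1-j))
          (show 0 ≤ J+1 by omega) (show J+1 ≤ q by omega),
        ← Finset.sum_Ico_consecutive (fun j => δ (j+1) + δ (d-j))
          (show 0 ≤ J+1 by omega) (show J+1 ≤ q by omega), add_mul,
        ← Finset.range_eq_Ico]
      have htail : (∑ j ∈ Finset.Ico (J+1) q, (δ (j+1) + δ (d-j))) * N ≤
          ∑ j ∈ Finset.Ico (J+1) q, (δ (j+1) - δ (d-j)) * g (d-1-j) := by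
        rw [Finset.sum_mul]
        refine Finset.sum_le_sum fun j hj => ?_
        simp only [Finset.mem_Ico] at hj
        have hu := hnn (j+1) (by omega)
        have hv := hnn (d-j) (by omega)
        have habs : |δ (j+1) - δ (d-j)| ≤ δ (j+1) + δ (d-j) :=
          abs_le.mpr ⟨by linarith, by linarith⟩
        have hNa : N ≤ -|g (d-1-j)| := hNabs (d-1-j) (by omega) (by omega)
        have h1 : -|(δ (j+1) - δ (d-j)) * g (d-1-j)| ≤ (δ (j+1) - δ (d-j)) * g (d-1-j) :=
          neg_abs_le _
        have h2 : |(δ (j+1) - δ (d-j)) * g (d-1-j)| ≤ (δ (j+1) + δ (d-j)) * |g (d-1-j)| := by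
          rw [abs_mul]
          exact mul_le_mul_of_nonneg_right habs (abs_nonneg _)
        have h3 : (δ (j+1) + δ (d-j)) * N ≤ (δ (j+1) + δ (d-j)) * (-|g (d-1-j)|) :=
          mul_le_mul_of_nonneg_left hNa (by linarith)
        have h4 : (δ (j+1) + δ (d-j)) * (-|g (d-1-j)|) = -((δ (j+1) + δ (d-j)) * |g (d-1-j)|) := by
          ring
        linarith
      have hhead : (∑ j ∈ Finset.range (J+1), (δ (j+1) + δ (d-j))) * N ≤
          ∑ j ∈ Finset.range (J+1), (δ (j+1) - δ (d-j)) * g (d-1-j) := by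
        have hconv : ∀ m : ℕ, ∑ l ∈ Finset.range m, δ (l+1) = ∑ l ∈ Finset.Icc 1 m, δ l := by
          intro m
          rw [← Finset.Ico_add_one_right_eq_Icc 1 m, Finset.sum_Ico_eq_sum_range,
            show m + 1 - 1 = m by omega]
          exact Finset.sum_congr rfl fun l _ => by congr 1; omega
        have hE : ∀ j, j ≤ J → 0 ≤ ∑ l ∈ Finset.range (j+1), (δ (l+1) - δ (d-l)) := by
          intro j hj
          rw [Finset.sum_sub_distrib, hconv]
          have := hibi j (by omega)
          linarith
        have habel := abel_aux (fun l => δ (l+1) - δ (d-l)) (fun j => g (d-1-j)) J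
          (fun j hj => by
            have h := hmono' (d-1-j) (by omega) (by omega)
            rw [show d-1-j-1 = d-1-(j+1) by omega] at h
            exact h)
          (fun j hj => hE j (by omega))
        have haJ : N ≤ g (d-1-J) := by
          rw [show d-1-J = t by omega]
          have h1 := hmono' t le_rfl ht2
          have h2 := hNle (t-1) (by omega) (by omega)
          linarith
        have hEJ : 0 ≤ ∑ l ∈ Finset.range (J+1), (δ (l+1) - δ (d-l)) := hE J le_rfl
        have hWE : ∑ l ∈ Finset.range (J+1), (δ (l+1) - δ (d-l)) ≤
            ∑ l ∈ Finset.range (J+1), (δ (l+1) + δ (d-l)) := by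
          refine Finset.sum_le_sum fun l hl => ?_
          simp only [Finset.mem_range] at hl
          have := hnn (d-l) (by omega)
          linarith
        calc (∑ j ∈ Finset.range (J+1), (δ (j+1) + δ (d-j))) * N
            ≤ (∑ l ∈ Finset.range (J+1), (δ (l+1) - δ (d-l))) * N :=
              mul_le_mul_of_nonpos_right hWE hN0
          _ ≤ (∑ l ∈ Finset.range (J+1), (δ (l+1) - δ (d-l))) * g (d-1-J) :=
              mul_le_mul_of_nonneg_left haJ hEJ
          _ ≤ ∑ j ∈ Finset.range (J+1), (δ (j+1) - δ (d-j)) * g (d-1-j) := habel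
      linarith
    linarith
  linarith
end
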